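/- arXiv:1502.05204 — 10 statements merged into one kernel-verified Lean document; each statement's English description precedes it below -/
import Mathlib

section
/- Let A and B be finite sets, let 0 < α ≤ 1, and let G ⊆ A×B be a bipartite graph with |G| ≥ α|A||B|. Then there exist subsets A' ⊆ A and B' ⊆ B such that (i) for every a' ∈ A' and b' ∈ B', the number of length-3 paths from a' to b' in G is at least α⁵|A||B|/2¹⁷, and (ii) |G ∩ (A'×B')| ≥ α|A'||B|/4 ≥ α²|A||B|/32. -/
/-!
Dependent random choice. After discarding the vertices of `A` of degree below `α|B|/2`, which
keeps half of the edges, Cauchy–Schwarz makes the neighbourhood `T` of a typical `b ∈ B` of size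
about `α|A|/2`, while a pair with fewer than `α³|B|/256` common neighbours lies in few such
neighbourhoods. Averaging `|T|² - (32/α)·#{such pairs in T}` over `b` gives a `T` with
`|T| ≥ α|A|/3` in which at most a fraction `α/32` of the pairs have low codegree; by Markov, half
of `T` forms a set `A'` each of whose vertices has low codegree with at most `α|A'|/8` others.
The vertices `b'` with at least `α|A'|/4` neighbours in `A'` carry half of the `≥ α|A'||B|/2`
edges leaving `A'`, and for `a' ∈ A'` at least `α|A'|/8` of these neighbours `a` share
`α³|B|/256` neighbours `b` with `a'`, each giving a path `a' - b - a - b'`.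
-/

open Finset

section Markov

variable {ι : Type*} (s : Finset ι) (f : ι → ℝ) {c : ℝ}

lemma sum_le_sum_filter_le_add_card_mul (hc : 0 ≤ c) :
    ∑ x ∈ s, f x ≤ ∑ x ∈ s with c ≤ f x, f x + #s * c := by
  rw [← sum_filter_add_sum_filter_not s (c ≤ f ·)]
  gcongr
  calc ∑ x ∈ s with ¬c ≤ f x, f x
      ≤ ∑ x ∈ s with ¬c ≤ f x, c := sum_le_sum fun x hx => (not_le.1 (mem_filter.1 hx).2).le
    _ = #{x ∈ s | ¬c ≤ f x} * c := by rw [sum_const, nsmul_eq_mul]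
    _ ≤ #s * c := by gcongr; exact filter_subset _ _

lemma card_filter_lt_mul_le_sum (hf : ∀ x ∈ s, 0 ≤ f x) :
    #{x ∈ s | c < f x} * c ≤ ∑ x ∈ s, f x :=
  calc (#{x ∈ s | c < f x} : ℝ) * c = ∑ x ∈ s with c < f x, c := by rw [sum_const, nsmul_eq_mul]
    _ ≤ ∑ x ∈ s with c < f x, f x := sum_le_sum fun x hx => (mem_filter.1 hx).2.le
    _ ≤ ∑ x ∈ s, f x := sum_le_sum_of_subset_of_nonneg (filter_subset _ _) fun x hx _ => hf x hx

lemma half_card_le_card_filter_le (hf : ∀ x ∈ s, 0 ≤ f x) (hc : 0 < c)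
    (h : ∑ x ∈ s, f x ≤ c * #s / 2) : (#s : ℝ) / 2 ≤ #{x ∈ s | f x ≤ c} := by
  have hsplit : (#{x ∈ s | f x ≤ c} : ℝ) + #{x ∈ s | c < f x} = #s := by
    simp_rw [← not_le]; exact_mod_cast card_filter_add_card_filter_not _
  have hlarge : (#{x ∈ s | c < f x} : ℝ) ≤ #s / 2 :=
    le_of_mul_le_mul_right (by linarith [card_filter_lt_mul_le_sum s f (c := c) hf]) hc
  linarith

end Markov

section Bipartite

variable {X Y : Type*} (r : X → Y → Prop) [∀ a b, Decidable (r a b)] (s : Finset X) (t : Finset Y)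

def codegree (a a' : X) : ℕ := #{b ∈ t | r a b ∧ r a' b}

lemma card_filter_product_eq_sum_card_bipartiteAbove :
    #{p ∈ s ×ˢ t | r p.1 p.2} = ∑ a ∈ s, #(t.bipartiteAbove r a) := by
  simp_rw [card_filter, sum_product, bipartiteAbove, card_filter]

lemma half_card_le_card_filter_card_filter_le (P : X → X → Prop)
    [∀ a a', Decidable (P a a')] (T : Finset X) {c : ℝ} (hc : 0 < c)
    (h : (#{q ∈ T ×ˢ T | P q.1 q.2} : ℝ) ≤ c * #T / 2) :
    (#T : ℝ) / 2 ≤ #{a ∈ T | (#{a' ∈ T | P a a'} : ℝ) ≤ c} := by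
  refine half_card_le_card_filter_le T _ (fun _ _ => by positivity) hc ?_
  have hsum := card_filter_product_eq_sum_card_bipartiteAbove P T T
  simp only [bipartiteAbove] at hsum
  rwa [← Nat.cast_sum, ← hsum]

lemma sum_card_filter_bipartiteBelow_product (P : X → X → Prop) [∀ a a', Decidable (P a a')] :
    ∑ b ∈ t, #{q ∈ s.bipartiteBelow r b ×ˢ s.bipartiteBelow r b | P q.1 q.2} =
      ∑ q ∈ s ×ˢ s with P q.1 q.2, codegree r t q.1 q.2 := by
  refine ((sum_card_bipartiteAbove_eq_sum_card_bipartiteBelow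
    (fun (q : X × X) b => r q.1 b ∧ r q.2 b)).trans
      (sum_congr rfl fun b _ => congrArg card ?_)).symm
  ext q
  simp only [bipartiteBelow, mem_filter, mem_product]
  tauto

/-- Averaging over `b ∈ t`: Cauchy–Schwarz bounds the first term, double counting the second. -/
lemma exists_sq_card_bipartiteBelow_sub_le (ht : t.Nonempty) (P : X → X → Prop)
    [∀ a a', Decidable (P a a')] (μ : ℝ) :
    ∃ b ∈ t, ((∑ b ∈ t, #(s.bipartiteBelow r b) : ℝ) / #t) ^ 2 -
        μ * (∑ q ∈ s ×ˢ s with P q.1 q.2, codegree r t q.1 q.2 : ℝ) / #t ≤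
      (#(s.bipartiteBelow r b) : ℝ) ^ 2 -
        μ * #{q ∈ s.bipartiteBelow r b ×ˢ s.bipartiteBelow r b | P q.1 q.2} := by
  apply exists_le_of_sum_le ht
  set E : ℝ := ∑ b ∈ t, (#(s.bipartiteBelow r b) : ℝ)
  set C : ℝ := ∑ b ∈ t, (#{q ∈ s.bipartiteBelow r b ×ˢ s.bipartiteBelow r b | P q.1 q.2} : ℝ)
  have hC : (∑ q ∈ s ×ˢ s with P q.1 q.2, codegree r t q.1 q.2 : ℝ) = C := by
    simp only [C]; exact_mod_cast (sum_card_filter_bipartiteBelow_product r s t P).symm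
  have ht0 : (0 : ℝ) < #t := by exact_mod_cast ht.card_pos
  rw [sum_const, nsmul_eq_mul, sum_sub_distrib, ← mul_sum, hC]
  calc (#t : ℝ) * ((E / #t) ^ 2 - μ * C / #t) = E ^ 2 / #t - μ * C := by field_simp
    _ ≤ _ := by gcongr; rw [div_le_iff₀' ht0]; exact sq_sum_le_card_mul_sum_sq

lemma sum_codegree_filter_lt_le {δ : ℝ} (hδ : 0 ≤ δ) :
    (∑ q ∈ s ×ˢ s with (codegree r t q.1 q.2 : ℝ) < δ, codegree r t q.1 q.2 : ℝ) ≤ δ * #s ^ 2 :=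
  calc (∑ q ∈ s ×ˢ s with (codegree r t q.1 q.2 : ℝ) < δ, codegree r t q.1 q.2 : ℝ)
      ≤ ∑ q ∈ s ×ˢ s with (codegree r t q.1 q.2 : ℝ) < δ, δ :=
        sum_le_sum fun q hq => (mem_filter.1 hq).2.le
    _ ≤ δ * #s ^ 2 := by
        rw [sum_const, nsmul_eq_mul, mul_comm, sq, ← Nat.cast_mul, ← card_product]
        gcongr
        exact filter_subset _ _

lemma sub_card_mul_le_sum_card_bipartiteBelow_filter {c : ℝ} (hc : 0 ≤ c) :
    (#{p ∈ s ×ˢ t | r p.1 p.2} : ℝ) - #s * c ≤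
      ∑ b ∈ t, (#({a ∈ s | c ≤ #(t.bipartiteAbove r a)}.bipartiteBelow r b) : ℝ) := by
  rw [← Nat.cast_sum, ← sum_card_bipartiteAbove_eq_sum_card_bipartiteBelow,
    card_filter_product_eq_sum_card_bipartiteAbove]
  push_cast
  linarith [sum_le_sum_filter_le_add_card_mul s (fun a => (#(t.bipartiteAbove r a) : ℝ)) hc]

lemma exists_large_subset_few_low_codegree_pairs (ht : t.Nonempty) {α : ℝ} (hα : 0 < α)
    (hr : α * #s * #t ≤ #{p ∈ s ×ˢ t | r p.1 p.2}) :
    ∃ T ⊆ s, α * #s / 3 ≤ #T ∧ (∀ a ∈ T, α / 2 * #t ≤ #(t.bipartiteAbove r a)) ∧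
      #{q ∈ T ×ˢ T | (codegree r t q.1 q.2 : ℝ) < α ^ 3 * #t / 256} ≤ α * #T ^ 2 / 32 := by
  set δ : ℝ := α ^ 3 * #t / 256
  set s₀ := {a ∈ s | α / 2 * #t ≤ #(t.bipartiteAbove r a)}
  have hs₀ : α * #s * #t / 2 ≤ ∑ b ∈ t, (#(s₀.bipartiteBelow r b) : ℝ) := by
    linarith [sub_card_mul_le_sum_card_bipartiteBelow_filter r s t (c := α / 2 * #t)
      (by positivity)]
  have hlow := (sum_codegree_filter_lt_le r s₀ t (δ := δ) (by positivity)).trans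
    (by gcongr; exact filter_subset _ _ : δ * #s₀ ^ 2 ≤ δ * #s ^ 2)
  -- the weight `32 / α` makes the averaged penalty at most half of `(α|s|/2)²`
  obtain ⟨b, -, hbT⟩ := exists_sq_card_bipartiteBelow_sub_le r s₀ t ht
    (fun a a' => (codegree r t a a' : ℝ) < δ) (32 / α)
  set T := s₀.bipartiteBelow r b
  set τ : ℝ := (#T : ℝ)
  set nLow : ℝ := (#{q ∈ T ×ˢ T | (codegree r t q.1 q.2 : ℝ) < δ} : ℝ)
  have ht0 : (0 : ℝ) < #t := by exact_mod_cast ht.card_pos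
  have hkey : α ^ 2 * #s ^ 2 / 8 ≤ τ ^ 2 - 32 / α * nLow := by
    have hE : α * #s / 2 ≤ (∑ b ∈ t, #(s₀.bipartiteBelow r b) : ℝ) / #t := by
      rw [le_div_iff₀ ht0]; linarith
    have hC : 32 / α * (∑ q ∈ s₀ ×ˢ s₀ with (codegree r t q.1 q.2 : ℝ) < δ,
        codegree r t q.1 q.2 : ℝ) / #t ≤ α ^ 2 * #s ^ 2 / 8 := by
      rw [div_le_iff₀ ht0]
      calc _ ≤ 32 / α * (δ * #s ^ 2) := by gcongr
        _ = _ := by field_simp; ring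
    nlinarith [pow_le_pow_left₀ (by positivity) hE 2]
  have hnLow : 0 ≤ 32 / α * nLow := by positivity
  refine ⟨T, (filter_subset _ _).trans (filter_subset _ _), ?_,
    fun a ha => (mem_filter.1 (mem_filter.1 ha).1).2, ?_⟩
  · refine le_of_pow_le_pow_left₀ two_ne_zero (by positivity) ?_
    nlinarith [sq_nonneg (α * (#s : ℝ))]
  · have : 32 / α * nLow ≤ τ ^ 2 := by linarith [show 0 ≤ α ^ 2 * #s ^ 2 / 8 by positivity]
    rw [div_mul_eq_mul_div, div_le_iff₀ hα] at this
    linarith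

lemma exists_large_subset_few_low_codegree_partners (hs : s.Nonempty) (ht : t.Nonempty) {α : ℝ}
    (hα : 0 < α) (hr : α * #s * #t ≤ #{p ∈ s ×ˢ t | r p.1 p.2}) :
    ∃ U ⊆ s, α * #s / 6 ≤ #U ∧ (∀ a ∈ U, α / 2 * #t ≤ #(t.bipartiteAbove r a)) ∧
      ∀ a ∈ U, (#{a' ∈ U | (codegree r t a a' : ℝ) < α ^ 3 * #t / 256} : ℝ) ≤ α * #U / 8 := by
  obtain ⟨T, hTs, hTcard, hTdeg, hTlow⟩ :=
    exists_large_subset_few_low_codegree_pairs r s t ht hα hr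
  have hT : (0 : ℝ) < #T := hTcard.trans_lt' (by have := hs.card_pos; positivity)
  set U := {a ∈ T | (#{a' ∈ T | (codegree r t a a' : ℝ) < α ^ 3 * #t / 256} : ℝ) ≤ α * #T / 16}
  have hU : (#T : ℝ) / 2 ≤ #U :=
    half_card_le_card_filter_card_filter_le _ T (by positivity) (by linarith)
  refine ⟨U, (filter_subset _ _).trans hTs, by linarith, fun a ha => hTdeg a (mem_filter.1 ha).1,
    fun a ha => ?_⟩
  calc _ ≤ (#{a' ∈ T | (codegree r t a a' : ℝ) < α ^ 3 * #t / 256} : ℝ) := by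
        gcongr; exact filter_subset _ _
    _ ≤ α * #T / 16 := (mem_filter.1 ha).2
    _ ≤ α * #U / 8 := by linarith [mul_le_mul_of_nonneg_left hU hα.le]

lemma mul_card_le_card_filter_product_filter {d : ℝ} (hd : 0 ≤ d)
    (hdeg : ∀ a ∈ s, d * #t ≤ #(t.bipartiteAbove r a)) :
    d * #s * #t / 2 ≤ #{p ∈ s ×ˢ {b ∈ t | d * #s / 2 ≤ #(s.bipartiteBelow r b)} | r p.1 p.2} := by
  have hprune := sum_le_sum_filter_le_add_card_mul t (fun b => (#(s.bipartiteBelow r b) : ℝ))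
    (c := d * #s / 2) (by positivity)
  have hedges : #s • (d * #t) ≤ ∑ b ∈ t, (#(s.bipartiteBelow r b) : ℝ) := by
    rw [← Nat.cast_sum, ← sum_card_bipartiteAbove_eq_sum_card_bipartiteBelow, Nat.cast_sum]
    exact card_nsmul_le_sum s _ _ hdeg
  rw [card_filter_product_eq_sum_card_bipartiteAbove,
    sum_card_bipartiteAbove_eq_sum_card_bipartiteBelow, Nat.cast_sum]
  linarith [nsmul_eq_mul (#s) (d * #t)]

lemma card_bipartiteBelow_sub_mul_le_card_paths (a' : X) (b' : Y) {U : Finset X} (hU : U ⊆ s)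
    {δ : ℝ} (hδ : 0 ≤ δ) :
    ((#(U.bipartiteBelow r b') : ℝ) - #{a ∈ U | (codegree r t a' a : ℝ) < δ}) * δ ≤
      #{p ∈ s ×ˢ t | r a' p.2 ∧ r p.1 p.2 ∧ r p.1 b'} := by
  set S := {a ∈ U.bipartiteBelow r b' | δ ≤ (codegree r t a' a : ℝ)}
  have hS : (#(U.bipartiteBelow r b') : ℝ) - #{a ∈ U | (codegree r t a' a : ℝ) < δ} ≤ #S := by
    have hsplit := card_filter_add_card_filter_not (s := U.bipartiteBelow r b')
      (fun a => δ ≤ (codegree r t a' a : ℝ))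
    have hlow : #{a ∈ U.bipartiteBelow r b' | ¬δ ≤ (codegree r t a' a : ℝ)} ≤
        #{a ∈ U | (codegree r t a' a : ℝ) < δ} :=
      card_le_card fun a ha => by
        simp only [mem_filter, mem_bipartiteBelow, not_le] at ha ⊢
        exact ⟨ha.1.1, ha.2⟩
    rw [← hsplit]
    push_cast
    linarith [(Nat.cast_le (α := ℝ)).2 hlow]
  calc _ ≤ (#S : ℝ) * δ := by gcongr
    _ ≤ ∑ a ∈ S, (codegree r t a' a : ℝ) := by
        rw [← nsmul_eq_mul]; exact card_nsmul_le_sum _ _ _ fun a ha => (mem_filter.1 ha).2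
    _ = ∑ a ∈ S, (#{b ∈ t | r a' b ∧ r a b ∧ r a b'} : ℝ) := sum_congr rfl fun a ha => by
        have hab' : r a b' := ((mem_bipartiteBelow r).1 (mem_filter.1 ha).1).2
        simp only [codegree, hab', and_true]
    _ ≤ ∑ a ∈ s, (#{b ∈ t | r a' b ∧ r a b ∧ r a b'} : ℝ) :=
        sum_le_sum_of_subset_of_nonneg
          (fun a ha => hU ((mem_bipartiteBelow r).1 (mem_filter.1 ha).1).1)
          fun _ _ _ => by positivity
    _ = _ := by rw [card_filter, sum_product]; simp_rw [card_filter]; push_cast; rfl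

end Bipartite

theorem stmt_0_general {X Y : Type*} [DecidableEq X] [DecidableEq Y]
    (A : Finset X) (B : Finset Y) (α : ℝ) (hα0 : 0 < α)
    (G : Finset (X × Y)) (hG : G ⊆ A ×ˢ B)
    (hGcard : α * (A.card : ℝ) * (B.card : ℝ) ≤ (G.card : ℝ)) :
    ∃ A' ⊆ A, ∃ B' ⊆ B,
      (∀ a' ∈ A', ∀ b' ∈ B',
        α ^ 5 * (A.card : ℝ) * (B.card : ℝ) / 2 ^ 17 ≤
          ((((A ×ˢ B).filter fun p => (a', p.2) ∈ G ∧ p ∈ G ∧ (p.1, b') ∈ G)).card : ℝ)) ∧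
      α * (A'.card : ℝ) * (B.card : ℝ) / 4 ≤ ((G ∩ (A' ×ˢ B')).card : ℝ) ∧
      α ^ 2 * (A.card : ℝ) * (B.card : ℝ) / 32 ≤ α * (A'.card : ℝ) * (B.card : ℝ) / 4 := by
  obtain rfl | hA := A.eq_empty_or_nonempty
  · exact ⟨∅, empty_subset _, ∅, empty_subset _, by simp, by simp, by simp⟩
  obtain rfl | hB := B.eq_empty_or_nonempty
  · exact ⟨∅, empty_subset _, ∅, empty_subset _, by simp, by simp, by simp⟩
  set r : X → Y → Prop := fun a b => (a, b) ∈ G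
  obtain ⟨A', hA'A, hA'card, hA'deg, hA'low⟩ :=
    exists_large_subset_few_low_codegree_partners r A B hA hB hα0
      (by rwa [filter_mem_eq_inter, inter_eq_right.2 hG])
  set δ : ℝ := α ^ 3 * #B / 256
  set B' := {b ∈ B | α / 2 * #A' / 2 ≤ #(A'.bipartiteBelow r b)}
  refine ⟨A', hA'A, B', filter_subset _ _, fun a' ha' b' hb' => ?_, ?_, ?_⟩
  · calc α ^ 5 * #A * #B / 2 ^ 17 ≤ (α / 2 * #A' / 2 - α * #A' / 8) * δ := by
          have : 0 ≤ α ^ 5 * #A * #B := by positivity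
          simp only [δ]
          linarith [mul_le_mul_of_nonneg_left hA'card (by positivity : (0 : ℝ) ≤ α ^ 4 * #B)]
      _ ≤ (#(A'.bipartiteBelow r b') - #{a ∈ A' | (codegree r B a' a : ℝ) < δ}) * δ := by
          gcongr
          exacts [(mem_filter.1 hb').2, hA'low a' ha']
      _ ≤ _ := card_bipartiteBelow_sub_mul_le_card_paths r A B a' b' hA'A (by positivity)
  · calc α * #A' * #B / 4 = α / 2 * #A' * #B / 2 := by ring
      _ ≤ #{p ∈ A' ×ˢ B' | r p.1 p.2} :=
          mul_card_le_card_filter_product_filter r A' B (by positivity) hA'deg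
      _ = #(G ∩ (A' ×ˢ B')) := by rw [filter_mem_eq_inter, inter_comm]
  · have h := mul_le_mul_of_nonneg_right (show α * #A / 8 ≤ #A' by linarith)
      (by positivity : (0 : ℝ) ≤ α * #B / 4)
    linarith

/-- **Graph Lemma** (Balog–Szemerédi–Gowers, graph version).
Given a bipartite graph `G ⊆ A × B` with `|G| ≥ α|A||B|`, there exist
`A' ⊆ A` and `B' ⊆ B` such that every pair `(a', b') ∈ A' × B'` is connected
by at least `α⁵|A||B|/2¹⁷` length-3 paths, and
`|G ∩ (A'×B')| ≥ α|A'||B|/4 ≥ α²|A||B|/32`. -/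
theorem stmt_0 {X Y : Type*} [DecidableEq X] [DecidableEq Y]
    (A : Finset X) (B : Finset Y) (α : ℝ) (hα0 : 0 < α) (hα1 : α ≤ 1)
    (G : Finset (X × Y)) (hG : G ⊆ A ×ˢ B)
    (hGcard : α * (A.card : ℝ) * (B.card : ℝ) ≤ (G.card : ℝ)) :
    ∃ A' ⊆ A, ∃ B' ⊆ B,
      (∀ a' ∈ A', ∀ b' ∈ B',
        α ^ 5 * (A.card : ℝ) * (B.card : ℝ) / 2 ^ 17 ≤
          ((((A ×ˢ B).filter fun p => (a', p.2) ∈ G ∧ p ∈ G ∧ (p.1, b') ∈ G)).card : ℝ)) ∧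
      α * (A'.card : ℝ) * (B.card : ℝ) / 4 ≤ ((G ∩ (A' ×ˢ B')).card : ℝ) ∧
      α ^ 2 * (A.card : ℝ) * (B.card : ℝ) / 32 ≤ α * (A'.card : ℝ) * (B.card : ℝ) / 4 :=
  stmt_0_general A B α hα0 G hG hGcard
end

section
/- There is an absolute constant C > 0 with the following property. Let A, B, S be finite subsets of an abelian group, let N ≥ 1 and t > 0 with |A||B| ≤ N² and |S| ≤ tN, and let 0 < α < 1. Then there exist an integer k ≤ C/α and subsets A₁,…,A_k ⊆ A and B₁,…,B_k ⊆ B such that (i) the remainder set R = {(a,b) ∈ A×B : a+b ∈ S} \ ⋃_{i=1}^k (A_i × B_i) has size at most αN², and (ii) |A_i + B_i| ≤ C·(1/α)⁵·t³·N for each i = 1,…,k. -/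
/-!
For a bipartite graph `H ⊆ A × B` with `E` edges, dependent random choice finds `A' ⊆ A` and
`B' ⊆ B` spanning `≳ E² / (|A||B|)` edges of `H` such that any `a ∈ A'`, `b ∈ B'` are joined by
`≳ E⁵ / (|A||B|)⁴` paths `a — b₁ — a₁ — b`: take `X` to be the neighbourhood of a vertex `b`
chosen so that few pairs in `X` have small codegree, let `A'` be the vertices of `X` lying in few
such pairs and `B'` the vertices with many neighbours in `X`. If every edge of `H` has its sum in
`S`, each path writes `a + b = (a + b₁) - (a₁ + b₁) + (a₁ + b)` with all three summands in `S`,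
so `|A' + B'| ≲ |S|³ (|A||B|)⁴ / E⁵`.

Starting from the pairs of `A × B` with sum in `S`, remove such rectangles `A' × B'` while more
than `αN²` pairs remain. Each step removes at least `|G|² / (12 N²)` of the remaining pairs `G`,
so the potential `N² / |G|`, which starts at least `1` and stays below `1 / α`, grows by at least
`1 / 12` per step.
-/

open Finset Pointwise

namespace Finset

variable {α β : Type*}

theorem card_filter_product_eq_sum (s : Finset α) (t : Finset β)
    (p : α → β → Prop) [DecidableRel p] :
    #{x ∈ s ×ˢ t | p x.1 x.2} = ∑ a ∈ s, #{b ∈ t | p a b} := by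
  simp only [card_filter, sum_product]

theorem three_mul_card_le_four_mul_card_filter {X : Finset α} (R : α → α → Prop)
    [DecidableRel R] {ε : ℝ} (hε : 0 < ε) (hR : (#{p ∈ X ×ˢ X | R p.1 p.2} : ℝ) ≤ ε * #X ^ 2) :
    3 * (#X : ℝ) ≤ 4 * #{a ∈ X | (#{a' ∈ X | R a a'} : ℝ) ≤ 4 * ε * #X} := by
  set T := {a ∈ X | ¬(#{a' ∈ X | R a a'} : ℝ) ≤ 4 * ε * #X}
  have hsplit := card_filter_add_card_filter_not (s := X)
    fun a => (#{a' ∈ X | R a a'} : ℝ) ≤ 4 * ε * #X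
  have hT : (#T : ℝ) * (4 * ε * #X) ≤ ε * #X ^ 2 := calc
    (#T : ℝ) * (4 * ε * #X) ≤ ∑ a ∈ T, (#{a' ∈ X | R a a'} : ℝ) := by
      rw [← nsmul_eq_mul]
      exact card_nsmul_le_sum _ _ _ fun a ha => (not_le.1 (mem_filter.1 ha).2).le
    _ ≤ ∑ a ∈ X, (#{a' ∈ X | R a a'} : ℝ) :=
      sum_le_sum_of_subset_of_nonneg (filter_subset _ _) fun _ _ _ => by positivity
    _ ≤ ε * #X ^ 2 := by exact_mod_cast card_filter_product_eq_sum X X R ▸ hR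
  rcases (#X).eq_zero_or_pos with hX | hX
  · simp [hX]
  · have hεX : 0 < ε * #X := by positivity
    have h4T : 4 * (#T : ℝ) ≤ #X := le_of_mul_le_mul_right (by nlinarith) hεX
    have : (#X : ℝ) = #{a ∈ X | (#{a' ∈ X | R a a'} : ℝ) ≤ 4 * ε * #X} + #T := by
      exact_mod_cast hsplit.symm
    linarith

variable [DecidableEq α] [DecidableEq β] (H : Finset (α × β))

theorem card_inter_product (X : Finset α) (Y : Finset β) :
    #(H ∩ X ×ˢ Y) = ∑ a ∈ X, #{b ∈ Y | (a, b) ∈ H} := by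
  rw [inter_comm, ← filter_mem_eq_inter]
  exact card_filter_product_eq_sum X Y fun a b => (a, b) ∈ H

theorem card_inter_product' (X : Finset α) (Y : Finset β) :
    #(H ∩ X ×ˢ Y) = ∑ b ∈ Y, #{a ∈ X | (a, b) ∈ H} :=
  (card_inter_product H X Y).trans
    (sum_card_bipartiteAbove_eq_sum_card_bipartiteBelow (fun a b => (a, b) ∈ H))

variable {H} {A : Finset α} {B : Finset β}

theorem card_eq_sum_card_row (hH : H ⊆ A ×ˢ B) : #H = ∑ a ∈ A, #{b ∈ B | (a, b) ∈ H} := by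
  rw [← card_inter_product, inter_eq_left.2 hH]

theorem card_eq_sum_card_col (hH : H ⊆ A ×ˢ B) : #H = ∑ b ∈ B, #{a ∈ A | (a, b) ∈ H} := by
  rw [← card_inter_product', inter_eq_left.2 hH]

end Finset

namespace BSG

variable {α β : Type*} [DecidableEq α] [DecidableEq β] (H : Finset (α × β))

def codegree (B : Finset β) (a a' : α) : ℕ := #{b ∈ B | (a, b) ∈ H ∧ (a', b) ∈ H}

/-- Paths `a — b₁ — a₁ — b` in `H`, recorded by their middle edge `(a₁, b₁)`. -/
def pathsThree (a : α) (b : β) : Finset (α × β) := {e ∈ H | (a, e.2) ∈ H ∧ (e.1, b) ∈ H}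

theorem pathsThree_mono {H₀ : Finset (α × β)} (h : H₀ ⊆ H) (a : α) (b : β) :
    pathsThree H₀ a b ⊆ pathsThree H a b := by
  intro e
  simp only [pathsThree, mem_filter]
  exact fun ⟨he, h₁, h₂⟩ => ⟨h he, h h₁, h h₂⟩

theorem sum_codegree_le_card_pathsThree (B : Finset β) {X : Finset α} {a : α} {b : β}
    (hX : ∀ a₁ ∈ X, (a₁, b) ∈ H) : ∑ a₁ ∈ X, codegree H B a a₁ ≤ #(pathsThree H a b) := by
  unfold codegree
  rw [← card_filter_product_eq_sum]
  refine card_le_card fun e he => ?_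
  simp only [mem_filter, mem_product, pathsThree] at he ⊢
  exact ⟨he.2.2, he.2.1, hX _ he.1.1⟩

variable {H} {A : Finset α} {B : Finset β}

theorem exists_subset_minDegree (hH : H ⊆ A ×ˢ B) :
    ∃ H₀ ⊆ H, #H ≤ 2 * #H₀ ∧ ∀ e ∈ H₀, #H ≤ 2 * #A * #{b ∈ B | (e.1, b) ∈ H₀} := by
  set d : α → ℕ := fun a => #{b ∈ B | (a, b) ∈ H}
  set A₀ := {a ∈ A | #H ≤ 2 * #A * d a}
  refine ⟨H ∩ A₀ ×ˢ B, inter_subset_left, ?_, fun e he => ?_⟩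
  · have hsplit : ∑ a ∈ A₀, d a + ∑ a ∈ A with ¬#H ≤ 2 * #A * d a, d a = ∑ a ∈ A, d a :=
      sum_filter_add_sum_filter_not _ _ _
    have hlow : 2 * #A * ∑ a ∈ A with ¬#H ≤ 2 * #A * d a, d a ≤ #A * #H := by
      rw [mul_sum]
      calc ∑ a ∈ A with ¬#H ≤ 2 * #A * d a, 2 * #A * d a
          ≤ ∑ a ∈ A with ¬#H ≤ 2 * #A * d a, #H := sum_le_sum fun a ha => by
            simp only [mem_filter] at ha; omega
        _ ≤ #A * #H := by
            rw [sum_const, smul_eq_mul]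
            exact Nat.mul_le_mul_right _ (card_filter_le _ _)
    rcases (#A).eq_zero_or_pos with hA | hA
    · simp [card_eq_zero.1 hA] at hH
      simp [hH]
    · have hsmall : 2 * ∑ a ∈ A with ¬#H ≤ 2 * #A * d a, d a ≤ #H :=
        Nat.le_of_mul_le_mul_left (by linarith) hA
      have hH₀ : #(H ∩ A₀ ×ˢ B) = ∑ a ∈ A₀, d a := card_inter_product _ _ _
      have hrow : #H = ∑ a ∈ A, d a := card_eq_sum_card_row hH
      omega
  · have hrow : {b ∈ B | (e.1, b) ∈ H ∩ A₀ ×ˢ B} = {b ∈ B | (e.1, b) ∈ H} := by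
      refine filter_congr fun b hb => ?_
      simp only [mem_inter, mem_product, hb, and_true, and_iff_left_iff_imp]
      exact fun _ => (mem_product.1 (mem_inter.1 he).2).1
    rw [hrow]
    exact (mem_filter.1 (mem_product.1 (mem_inter.1 he).2).1).2

theorem sum_card_filter_codegree_lt_le {τ : ℝ} (hτ : 0 ≤ τ) :
    ∑ b ∈ B, (#{p ∈ {a ∈ A | (a, b) ∈ H} ×ˢ {a ∈ A | (a, b) ∈ H} |
      (codegree H B p.1 p.2 : ℝ) < τ} : ℝ) ≤ τ * #A ^ 2 := by
  set L := {p ∈ A ×ˢ A | (codegree H B p.1 p.2 : ℝ) < τ}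
  have hcount : ∑ b ∈ B, #{p ∈ {a ∈ A | (a, b) ∈ H} ×ˢ {a ∈ A | (a, b) ∈ H} |
      (codegree H B p.1 p.2 : ℝ) < τ} = ∑ p ∈ L, codegree H B p.1 p.2 := by
    refine ((sum_card_bipartiteAbove_eq_sum_card_bipartiteBelow (s := L) (t := B)
      (fun p b => (p.1, b) ∈ H ∧ (p.2, b) ∈ H)).trans
      (sum_congr rfl fun b _ => congrArg card (Finset.ext fun p => ?_))).symm
    simp only [L, bipartiteBelow, mem_filter, mem_product]
    tauto
  calc _ = ∑ p ∈ L, (codegree H B p.1 p.2 : ℝ) := by exact_mod_cast hcount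
    _ ≤ ∑ p ∈ L, τ := sum_le_sum fun p hp => (mem_filter.1 hp).2.le
    _ ≤ τ * #A ^ 2 := by
      rw [sum_const, nsmul_eq_mul, mul_comm, sq, ← Nat.cast_mul, ← card_product]
      exact mul_le_mul_of_nonneg_left (by exact_mod_cast card_filter_le _ _) hτ

theorem exists_nbhd_few_low_codegree (hH : H ⊆ A ×ˢ B) (hne : H.Nonempty) {τ ε : ℝ}
    (hτ : 0 ≤ τ) (hε : 0 < ε) (hτε : 2 * #B * τ * #A ^ 2 ≤ ε * #H ^ 2) :
    ∃ X ⊆ A, ∃ b ∈ B, (∀ a ∈ X, (a, b) ∈ H) ∧ (#H : ℝ) ^ 2 ≤ 2 * #B ^ 2 * #X ^ 2 ∧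
      (#{p ∈ X ×ˢ X | (codegree H B p.1 p.2 : ℝ) < τ} : ℝ) ≤ ε * #X ^ 2 := by
  set d : β → ℝ := fun b => #{a ∈ A | (a, b) ∈ H}
  set bad : β → ℝ := fun b => #{p ∈ {a ∈ A | (a, b) ∈ H} ×ˢ {a ∈ A | (a, b) ∈ H} |
    (codegree H B p.1 p.2 : ℝ) < τ}
  obtain ⟨e, he⟩ := hne
  have hB : B.Nonempty := ⟨e.2, (mem_product.1 (hH he)).2⟩
  have hcs : (#H : ℝ) ^ 2 ≤ #B * ∑ b ∈ B, d b ^ 2 := by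
    have : (#H : ℝ) = ∑ b ∈ B, d b := by simp only [d]; exact_mod_cast card_eq_sum_card_col hH
    rw [this]
    exact sq_sum_le_card_mul_sum_sq
  have hbad : ∑ b ∈ B, bad b ≤ τ * #A ^ 2 := sum_card_filter_codegree_lt_le hτ
  -- by Cauchy–Schwarz and `hbad`, the average of `d b ^ 2 - bad b / ε` is at least
  -- `#H ^ 2 / (2 * #B ^ 2)`, so some `b` does at least as well
  obtain ⟨b, hb, hgood⟩ := exists_le_of_sum_le hB (f := fun _ => (#H : ℝ) ^ 2)
    (g := fun b => 2 * #B ^ 2 * (d b ^ 2 - bad b / ε)) (by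
      have hB0 : (0 : ℝ) < #B := by exact_mod_cast hB.card_pos
      rw [sum_const, nsmul_eq_mul, ← mul_sum, sum_sub_distrib, ← sum_div]
      have : 2 * #B ^ 2 * ((∑ b ∈ B, bad b) / ε) ≤ #B * #H ^ 2 := by
        rw [mul_div_assoc', div_le_iff₀ hε]
        nlinarith [mul_le_mul_of_nonneg_left hbad (by positivity : (0 : ℝ) ≤ 2 * #B ^ 2)]
      nlinarith)
  have hbad0 : 0 ≤ bad b := by positivity
  refine ⟨_, filter_subset _ _, b, hb, fun a ha => (mem_filter.1 ha).2, ?_, ?_⟩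
  · have : 0 ≤ bad b / ε := by positivity
    have : 0 ≤ (#B : ℝ) ^ 2 := by positivity
    change (#H : ℝ) ^ 2 ≤ 2 * #B ^ 2 * d b ^ 2
    nlinarith
  · change bad b ≤ ε * d b ^ 2
    have hB0 : (0 : ℝ) < 2 * #B ^ 2 := by have := hB.card_pos; positivity
    have : bad b / ε ≤ d b ^ 2 :=
      sub_nonneg.1 ((mul_nonneg_iff_of_pos_left hB0).1 ((sq_nonneg _).trans hgood))
    rwa [div_le_iff₀ hε, mul_comm] at this

theorem card_mul_sub_le_card_inter_product_filter {X Y : Finset α} (hYX : Y ⊆ X) {c d : ℝ}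
    (hc : 0 ≤ c) (hd : ∀ a ∈ Y, d ≤ #{b ∈ B | (a, b) ∈ H}) :
    #Y * d - #B * c ≤ #(H ∩ Y ×ˢ {b ∈ B | c ≤ #{a ∈ X | (a, b) ∈ H}}) := by
  have hrow : (#Y : ℝ) * d ≤ ∑ b ∈ B, (#{a ∈ Y | (a, b) ∈ H} : ℝ) := by
    have : ∑ a ∈ Y, (#{b ∈ B | (a, b) ∈ H} : ℝ) = ∑ b ∈ B, (#{a ∈ Y | (a, b) ∈ H} : ℝ) := by
      exact_mod_cast (card_inter_product H Y B).symm.trans (card_inter_product' H Y B)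
    rw [← this, ← nsmul_eq_mul]
    exact card_nsmul_le_sum _ _ _ hd
  rw [← sum_filter_add_sum_filter_not B fun b => c ≤ #{a ∈ X | (a, b) ∈ H}] at hrow
  have hin : ∑ b ∈ B with c ≤ #{a ∈ X | (a, b) ∈ H}, (#{a ∈ Y | (a, b) ∈ H} : ℝ) =
      #(H ∩ Y ×ˢ {b ∈ B | c ≤ #{a ∈ X | (a, b) ∈ H}}) := by
    exact_mod_cast (card_inter_product' H _ _).symm
  have hout : ∑ b ∈ B with ¬c ≤ #{a ∈ X | (a, b) ∈ H}, (#{a ∈ Y | (a, b) ∈ H} : ℝ) ≤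
      #B * c := calc
    _ ≤ ∑ b ∈ B with ¬c ≤ #{a ∈ X | (a, b) ∈ H}, c := sum_le_sum fun b hb =>
      ((Nat.cast_le.2 (card_le_card (filter_subset_filter _ hYX))).trans
        (not_le.1 (mem_filter.1 hb).2).le)
    _ ≤ #B * c := by
      rw [sum_const, nsmul_eq_mul]
      exact mul_le_mul_of_nonneg_right (by exact_mod_cast card_filter_le _ _) hc
  linarith

theorem card_sub_card_mul_le_card_pathsThree (X : Finset α) (a : α) (b : β) {τ : ℝ}
    (hτ : 0 ≤ τ) : ((#{a₁ ∈ X | (a₁, b) ∈ H} : ℝ) - #{a₁ ∈ X | (codegree H B a a₁ : ℝ) < τ}) * τ ≤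
      #(pathsThree H a b) := by
  set G := {a₁ ∈ X | (a₁, b) ∈ H ∧ τ ≤ codegree H B a a₁}
  have hG : (#{a₁ ∈ X | (a₁, b) ∈ H} : ℝ) ≤ #G + #{a₁ ∈ X | (codegree H B a a₁ : ℝ) < τ} := by
    refine (Nat.cast_le.2 ((card_le_card fun a₁ ha₁ => ?_).trans (card_union_le _ _))).trans
      (by push_cast; rfl)
    simp only [G, mem_union, mem_filter] at ha₁ ⊢
    by_cases h : τ ≤ codegree H B a a₁
    · exact Or.inl ⟨ha₁.1, ha₁.2, h⟩
    · exact Or.inr ⟨ha₁.1, not_le.1 h⟩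
  calc _ ≤ (#G : ℝ) * τ := mul_le_mul_of_nonneg_right (by linarith) hτ
    _ ≤ ∑ a₁ ∈ G, (codegree H B a a₁ : ℝ) := by
      rw [← nsmul_eq_mul]
      exact card_nsmul_le_sum _ _ _ fun a₁ ha₁ => (mem_filter.1 ha₁).2.2
    _ ≤ #(pathsThree H a b) := by
      exact_mod_cast sum_codegree_le_card_pathsThree H B (X := G) (a := a) fun a₁ ha₁ =>
        (mem_filter.1 ha₁).2.1

theorem exists_subsets_of_forall_le_degree (hH : H ⊆ A ×ˢ B) {E : ℝ} (hE : 0 < E)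
    (hEH : E ≤ 2 * #H) (hdeg : ∀ e ∈ H, E ≤ 2 * #A * #{b ∈ B | (e.1, b) ∈ H}) :
    ∃ A' ⊆ A, ∃ B' ⊆ B, E ^ 2 ≤ 12 * #A * #B * #(H ∩ A' ×ˢ B') ∧
      ∀ a ∈ A', ∀ b ∈ B', E ^ 5 ≤ 24576 * (#A * #B) ^ 4 * #(pathsThree H a b) := by
  have hne : H.Nonempty := card_pos.1 (by exact_mod_cast (by linarith : (0 : ℝ) < #H))
  obtain ⟨⟨a₀, b₀⟩, he₀⟩ := hne
  have hM : (0 : ℝ) < #A := by exact_mod_cast card_pos.2 ⟨a₀, (mem_product.1 (hH he₀)).1⟩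
  have hn : (0 : ℝ) < #B := by exact_mod_cast card_pos.2 ⟨b₀, (mem_product.1 (hH he₀)).2⟩
  -- codegree threshold and tolerance for dependent random choice, tuned so that both
  -- conclusions hold once `E ≤ 3 * #B * #X`
  set τ : ℝ := E ^ 3 / (512 * #A ^ 3 * #B ^ 2) with hτdef
  set ε : ℝ := E / (64 * #A * #B) with hεdef
  have hτ : 0 ≤ τ := by positivity
  have hε : 0 < ε := by positivity
  obtain ⟨X, hXA, b₀, -, hXb₀, hXcard, hXbad⟩ := exists_nbhd_few_low_codegree hH ⟨_, he₀⟩ hτ hε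
    (calc 2 * #B * τ * #A ^ 2 = ε * (E / 2) ^ 2 := by rw [hτdef, hεdef]; field_simp; ring
      _ ≤ ε * #H ^ 2 := by gcongr; linarith)
  have hX : E ≤ 3 * #B * #X := by
    refine (pow_le_pow_iff_left₀ hE.le (by positivity) two_ne_zero).1 ?_
    nlinarith
  set A' := {a ∈ X | (#{a' ∈ X | (codegree H B a a' : ℝ) < τ} : ℝ) ≤ 4 * ε * #X}
  have hA'X : A' ⊆ X := filter_subset _ _
  have hA' : 3 * (#X : ℝ) ≤ 4 * #A' := three_mul_card_le_four_mul_card_filter _ hε hXbad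
  refine ⟨A', hA'X.trans hXA, {b ∈ B | 8 * ε * #X ≤ #{a ∈ X | (a, b) ∈ H}}, filter_subset _ _,
    ?_, fun a ha b hb => ?_⟩
  · have hcap := card_mul_sub_le_card_inter_product_filter (c := 8 * ε * #X)
      (d := E / (2 * #A)) hA'X (by positivity) fun a ha =>
        (div_le_iff₀' (by positivity : (0 : ℝ) < 2 * #A)).2 (hdeg (a, b₀) (hXb₀ a (hA'X ha)))
    calc E ^ 2 ≤ E * (3 * #B * #X) := by rw [sq]; exact mul_le_mul_of_nonneg_left hX hE.le
      _ ≤ 3 / 2 * #B * E * (4 * #A' - #X) := by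
        nlinarith [mul_le_mul_of_nonneg_left hA' (by positivity : (0 : ℝ) ≤ #B * E)]
      _ = 12 * #A * #B * (#A' * (E / (2 * #A)) - #B * (8 * ε * #X)) := by
        rw [hεdef]; field_simp; ring
      _ ≤ _ := by gcongr
  · have hpaths := card_sub_card_mul_le_card_pathsThree (H := H) (B := B) X a b hτ
    have hrow : 8 * ε * #X ≤ (#{a₁ ∈ X | (a₁, b) ∈ H} : ℝ) := (mem_filter.1 hb).2
    have hbad : (#{a₁ ∈ X | (codegree H B a a₁ : ℝ) < τ} : ℝ) ≤ 4 * ε * #X := (mem_filter.1 ha).2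
    calc E ^ 5 ≤ E ^ 4 * (3 * #B * #X) := by
          rw [pow_succ]; exact mul_le_mul_of_nonneg_left hX (by positivity)
      _ = 24576 * (#A * #B) ^ 4 * (4 * ε * #X * τ) := by rw [hτdef, hεdef]; field_simp; ring
      _ ≤ _ := by
          gcongr
          exact le_trans (by nlinarith) hpaths

theorem exists_subsets_dense_many_pathsThree (hH : H ⊆ A ×ˢ B) :
    ∃ A' ⊆ A, ∃ B' ⊆ B, #H ^ 2 ≤ 12 * #A * #B * #(H ∩ A' ×ˢ B') ∧
      ∀ a ∈ A', ∀ b ∈ B', #H ^ 5 ≤ 24576 * (#A * #B) ^ 4 * #(pathsThree H a b) := by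
  rcases H.eq_empty_or_nonempty with rfl | hne
  · exact ⟨∅, empty_subset _, ∅, empty_subset _, by simp, by simp⟩
  obtain ⟨H₀, hH₀H, hH₀card, hdeg⟩ := exists_subset_minDegree hH
  obtain ⟨A', hA', B', hB', hcap, hpaths⟩ :=
    exists_subsets_of_forall_le_degree (hH₀H.trans hH) (E := #H) (by exact_mod_cast hne.card_pos)
      (by exact_mod_cast hH₀card) fun e he => by exact_mod_cast hdeg e he
  refine ⟨A', hA', B', hB', ?_, fun a ha b hb => ?_⟩
  · have := hcap.trans (by gcongr :
      _ ≤ 12 * (#A : ℝ) * #B * #(H ∩ A' ×ˢ B'))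
    exact_mod_cast this
  · have := (hpaths a ha b hb).trans (by gcongr; exact pathsThree_mono H hH₀H a b :
      _ ≤ 24576 * ((#A : ℝ) * #B) ^ 4 * #(pathsThree H a b))
    exact_mod_cast this

theorem card_add_mul_le_card_pow_three {γ : Type*} [AddCommGroup γ] [DecidableEq γ]
    {H : Finset (γ × γ)} {S X Y : Finset γ} (hHS : ∀ e ∈ H, e.1 + e.2 ∈ S) {P : ℝ}
    (hP : ∀ a ∈ X, ∀ b ∈ Y, P ≤ #(pathsThree H a b)) : #(X + Y) * P ≤ #S ^ 3 := by
  -- distinct paths `a — b₁ — a₁ — b` give distinct triples `(a + b₁, a₁ + b₁, a₁ + b) ∈ S³`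
  -- with alternating sum `a + b`
  have key := card_nsmul_le_card_nsmul (s := X + Y) (t := S ×ˢ S ×ˢ S) (m := P) (n := (1 : ℝ))
    (fun x (q : γ × γ × γ) => q.1 - q.2.1 + q.2.2 = x) (fun x hx => by
      obtain ⟨a, ha, b, hb, rfl⟩ := mem_add.1 hx
      refine (hP a ha b hb).trans (Nat.cast_le.2 (card_le_card_of_injOn
        (fun e => (a + e.2, e.1 + e.2, e.1 + b)) (fun e he => ?_) fun e _ e' _ hee' => ?_))
      · rw [mem_coe, pathsThree, mem_filter] at he
        rw [mem_coe, mem_bipartiteAbove, mem_product, mem_product]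
        exact ⟨⟨hHS _ he.2.1, hHS _ he.1, hHS _ he.2.2⟩, by dsimp only; abel⟩
      · simp only [Prod.mk.injEq, add_right_inj, add_left_inj] at hee'
        exact Prod.ext hee'.2.2 hee'.1)
    fun q _ => by
      refine Nat.cast_le_one.2 (card_le_one.2 fun x hx y hy => ?_)
      rw [mem_bipartiteBelow] at hx hy
      exact hx.2.symm.trans hy.2
  simpa [card_product, pow_succ, mul_assoc] using key

theorem exists_subsets_sq_card_le_and_card_add_le {γ : Type*} [AddCommGroup γ] [DecidableEq γ]
    {A B S : Finset γ} {G : Finset (γ × γ)} (hG : G ⊆ A ×ˢ B) (hGS : ∀ e ∈ G, e.1 + e.2 ∈ S)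
    {N δ : ℝ} (hN : 0 < N) (hAB : (#A : ℝ) * #B ≤ N ^ 2) (hδ : 0 ≤ δ) (hGδ : δ * N ^ 2 ≤ #G) :
    ∃ X ⊆ A, ∃ Y ⊆ B, (#G : ℝ) ^ 2 ≤ 12 * N ^ 2 * #(G ∩ X ×ˢ Y) ∧
      #(X + Y) * (δ ^ 5 * N ^ 2) ≤ 24576 * #S ^ 3 := by
  obtain ⟨X, hXA, Y, hYB, hcap, hpaths⟩ := exists_subsets_dense_many_pathsThree hG
  refine ⟨X, hXA, Y, hYB, ?_, ?_⟩
  · calc (#G : ℝ) ^ 2 ≤ 12 * #A * #B * #(G ∩ X ×ˢ Y) := by exact_mod_cast hcap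
      _ ≤ 12 * N ^ 2 * #(G ∩ X ×ˢ Y) := by rw [mul_assoc 12]; gcongr
  · have hP : ∀ a ∈ X, ∀ b ∈ Y, δ ^ 5 * N ^ 2 / 24576 ≤ #(pathsThree G a b) := by
      intro a ha b hb
      rw [div_le_iff₀ (by norm_num)]
      refine le_of_mul_le_mul_right ?_ (pow_pos hN 8)
      calc δ ^ 5 * N ^ 2 * N ^ 8 = (δ * N ^ 2) ^ 5 := by ring
        _ ≤ (#G : ℝ) ^ 5 := by gcongr
        _ ≤ 24576 * (#A * #B) ^ 4 * #(pathsThree G a b) := by exact_mod_cast hpaths a ha b hb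
        _ ≤ 24576 * (N ^ 2) ^ 4 * #(pathsThree G a b) := by gcongr
        _ = _ := by ring
    have := card_add_mul_le_card_pow_three hGS hP
    linarith

section Cover

variable (P : Finset α → Finset β → Prop) {G₀ : Finset (α × β)} {c δ m : ℝ}

theorem exists_rectangle_cover_of_subset (hc : 0 ≤ c) (hδ : 0 < δ) (hm : 0 < m)
    (hstep : ∀ G ⊆ G₀, δ * m < #G → ∃ X Y, P X Y ∧ (#G : ℝ) ^ 2 ≤ c * m * #(G ∩ X ×ˢ Y)) :
    ∀ G ⊆ G₀, ∃ (k : ℕ) (X : Fin k → Finset α) (Y : Fin k → Finset β), (∀ i, P (X i) (Y i)) ∧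
      #(G \ univ.biUnion fun i => X i ×ˢ Y i) ≤ δ * m ∧
      (k = 0 ∨ δ * m < #G ∧ k + c * m / #G ≤ c / δ + 1) := by
  intro G
  induction G using Finset.strongInduction with | H G ih => ?_
  intro hG
  by_cases hsmall : (#G : ℝ) ≤ δ * m
  · exact ⟨0, Fin.elim0, Fin.elim0, fun i => i.elim0, by simpa using hsmall, Or.inl rfl⟩
  obtain ⟨X₀, Y₀, hP₀, hcap⟩ := hstep G hG (not_le.1 hsmall)
  have hGpos : (0 : ℝ) < #G := (by positivity : 0 < δ * m).trans (not_le.1 hsmall)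
  have hcap_pos : (0 : ℝ) < #(G ∩ X₀ ×ˢ Y₀) := by
    by_contra! h
    nlinarith [mul_nonpos_of_nonneg_of_nonpos (mul_nonneg hc hm.le) h]
  obtain ⟨e, he⟩ := card_pos.1 (by exact_mod_cast hcap_pos)
  have hG'G : G \ X₀ ×ˢ Y₀ ⊂ G :=
    ssubset_iff_of_subset sdiff_subset |>.2 ⟨e, (mem_inter.1 he).1, fun h =>
      (mem_sdiff.1 h).2 (mem_inter.1 he).2⟩
  have hcard : (#(G \ X₀ ×ˢ Y₀) : ℝ) + #(G ∩ X₀ ×ˢ Y₀) = #G := by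
    exact_mod_cast card_sdiff_add_card_inter G _
  obtain ⟨k, X, Y, hP, hrem, hk⟩ := ih _ hG'G (sdiff_subset.trans hG)
  refine ⟨k + 1, Fin.cons X₀ X, Fin.cons Y₀ Y, Fin.cases hP₀ hP,
    le_trans (Nat.cast_le.2 (card_le_card fun p => ?_)) hrem, Or.inr ⟨not_le.1 hsmall, ?_⟩⟩
  · simp only [mem_sdiff, mem_biUnion, mem_univ, true_and, Fin.exists_fin_succ, Fin.cons_zero,
      Fin.cons_succ]
    tauto
  push_cast
  rcases hk with rfl | ⟨hG'big, hk⟩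
  · have : c * m / #G ≤ c / δ := by
      rw [div_le_div_iff₀ hGpos hδ, mul_assoc, mul_comm m]
      exact mul_le_mul_of_nonneg_left (not_le.1 hsmall).le hc
    linarith
  · have hG'pos : (0 : ℝ) < #(G \ X₀ ×ˢ Y₀) := (by positivity : 0 < δ * m).trans hG'big
    -- the potential `c m / |G|` grows by at least one in each step
    have : c * m / #G + 1 ≤ c * m / #(G \ X₀ ×ˢ Y₀) := by
      rw [div_add_one hGpos.ne', div_le_div_iff₀ hGpos hG'pos]
      nlinarith [mul_le_mul_of_nonneg_left (by linarith : (#(G \ X₀ ×ˢ Y₀) : ℝ) ≤ #G) hGpos.le]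
    linarith

theorem exists_rectangle_cover (hc : 1 ≤ c) (hδ : 0 < δ) (hm : 0 < m) (hG₀ : (#G₀ : ℝ) ≤ m)
    (hstep : ∀ G ⊆ G₀, δ * m < #G → ∃ X Y, P X Y ∧ (#G : ℝ) ^ 2 ≤ c * m * #(G ∩ X ×ˢ Y)) :
    ∃ (k : ℕ) (X : Fin k → Finset α) (Y : Fin k → Finset β), (k : ℝ) ≤ c / δ ∧
      (∀ i, P (X i) (Y i)) ∧ #(G₀ \ univ.biUnion fun i => X i ×ˢ Y i) ≤ δ * m := by
  obtain ⟨k, X, Y, hP, hrem, hk⟩ :=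
    exists_rectangle_cover_of_subset P (by linarith) hδ hm hstep G₀ Subset.rfl
  refine ⟨k, X, Y, ?_, hP, hrem⟩
  rcases hk with rfl | ⟨hG₀pos, hk⟩
  · simp only [CharP.cast_eq_zero]; positivity
  · have : c ≤ c * m / #G₀ := by
      rw [le_div_iff₀ ((by positivity : 0 < δ * m).trans hG₀pos)]; gcongr
    linarith

end Cover

end BSG

/-- **BSG Corollary**: there is an absolute constant `C > 0` such that for any finite
subsets `A, B, S` of an abelian group with `|A||B| ≤ N²` and `|S| ≤ tN`, and any
`0 < α < 1`, there are `k ≤ C/α` bicliques `Aᵢ × Bᵢ` (with `Aᵢ ⊆ A`, `Bᵢ ⊆ B`) such that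
the remainder `R = {(a,b) ∈ A×B : a+b ∈ S} \ ⋃ᵢ (Aᵢ × Bᵢ)` has size at most `αN²`,
and `|Aᵢ + Bᵢ| ≤ C(1/α)⁵t³N` for each `i`. -/
theorem stmt_2 : ∃ C : ℝ, 0 < C ∧
    ∀ (γ : Type) [AddCommGroup γ] [DecidableEq γ]
      (A B S : Finset γ) (N t α : ℝ),
      1 ≤ N → 0 < t → 0 < α → α < 1 →
      (A.card : ℝ) * (B.card : ℝ) ≤ N ^ 2 → (S.card : ℝ) ≤ t * N →
      ∃ (k : ℕ) (A₁ B₁ : Fin k → Finset γ),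
        (k : ℝ) ≤ C / α ∧
        (∀ i, A₁ i ⊆ A) ∧ (∀ i, B₁ i ⊆ B) ∧
        (((((A ×ˢ B).filter fun p => p.1 + p.2 ∈ S) \
            Finset.univ.biUnion fun i => A₁ i ×ˢ B₁ i).card : ℝ) ≤ α * N ^ 2) ∧
        (∀ i, ((A₁ i + B₁ i).card : ℝ) ≤ C * (1 / α) ^ 5 * t ^ 3 * N) := by
  refine ⟨24576, by norm_num, fun γ _ _ A B S N t α hN _ hα _ hAB hS => ?_⟩
  have hN0 : 0 < N := one_pos.trans_le hN
  have hG₀ : (#((A ×ˢ B).filter fun p => p.1 + p.2 ∈ S) : ℝ) ≤ N ^ 2 :=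
    le_trans (by exact_mod_cast (card_filter_le _ _).trans (card_product A B).le) hAB
  obtain ⟨k, X, Y, hk, hXY, hrem⟩ := BSG.exists_rectangle_cover
    (fun X Y => X ⊆ A ∧ Y ⊆ B ∧ (#(X + Y) : ℝ) ≤ 24576 * (1 / α) ^ 5 * t ^ 3 * N)
    (c := 24576) (by norm_num) hα (by positivity) hG₀ fun G hG hGbig => by
      obtain ⟨X, hXA, Y, hYB, hcap, hsum⟩ := BSG.exists_subsets_sq_card_le_and_card_add_le
        (hG.trans (filter_subset _ _)) (fun e he => (mem_filter.1 (hG he)).2) hN0 hAB hα.le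
        hGbig.le
      refine ⟨X, Y, ⟨hXA, hYB, ?_⟩, hcap.trans (by gcongr; norm_num)⟩
      have hS3 : (#S : ℝ) ^ 3 ≤ (t * N) ^ 3 := by gcongr
      rw [show 24576 * (1 / α) ^ 5 * t ^ 3 * N = 24576 * (t * N) ^ 3 / (α ^ 5 * N ^ 2) by
        field_simp, le_div_iff₀ (by positivity)]
      linarith
  exact ⟨k, X, Y, hk, fun i => (hXY i).1, fun i => (hXY i).2.1, hrem, fun i => (hXY i).2.2⟩
end

section
/- Let A and B be finite subsets of an abelian group, let G ⊆ A×B, and let S = {a+b : (a,b) ∈ G}. Let A' ⊆ A and B' ⊆ B, and let K > 0 be a real number. Suppose that for every a' ∈ A' and b' ∈ B' there are at least K pairs (a,b) ∈ A×B with (a',b) ∈ G, (a,b) ∈ G, and (a,b') ∈ G. Then K·|A'+B'| ≤ |S|³. -/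
/-!
A path `(a, b)` from `a'` to `b'` is marked by the triple `(a' + b, a + b, a + b') ∈ S³`, whose
alternating sum `x - y + z` is `a' + b'`. Choosing one representative `(a', b')` for each
`c ∈ A' + B'`, the marking is injective on the paths of that representative (the first
coordinate recovers `b`, the last one `a`), and the paths of different `c` land in different
fibres of `(x, y, z) ↦ x - y + z`. Summing `K` over `A' + B'` is therefore bounded by `|S|³`.
-/

open Finset Pointwise

section

variable {γ : Type*} [AddCommGroup γ] [DecidableEq γ]

def lengthThreePaths (A B : Finset γ) (G : Finset (γ × γ)) (a' b' : γ) : Finset (γ × γ) :=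
  (A ×ˢ B).filter fun p => (a', p.2) ∈ G ∧ p ∈ G ∧ (p.1, b') ∈ G

def alternatingSumFiber (S : Finset γ) (c : γ) : Finset (γ × γ × γ) :=
  (S ×ˢ S ×ˢ S).filter fun t => t.1 - t.2.1 + t.2.2 = c

theorem card_lengthThreePaths_le_card_alternatingSumFiber (A B : Finset γ)
    (G : Finset (γ × γ)) (a' b' : γ) :
    #(lengthThreePaths A B G a' b') ≤
      #(alternatingSumFiber (G.image fun p => p.1 + p.2) (a' + b')) := by
  refine card_le_card_of_injOn (fun p => (a' + p.2, p.1 + p.2, p.1 + b')) ?_ ?_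
  · rintro ⟨a, b⟩ hp
    obtain ⟨-, hleft, hmid, hright⟩ := mem_filter.1 hp
    simp only [alternatingSumFiber, coe_filter, Set.mem_ofPred_eq, mem_product, mem_image]
    exact ⟨⟨⟨_, hleft, rfl⟩, ⟨_, hmid, rfl⟩, ⟨_, hright, rfl⟩⟩, by abel⟩
  · rintro ⟨a₁, b₁⟩ - ⟨a₂, b₂⟩ - h
    simp only [Prod.mk.injEq, add_right_inj, add_left_inj] at h
    obtain ⟨hb, -, ha⟩ := h
    rw [ha, hb]

theorem sum_card_alternatingSumFiber_le (S C : Finset γ) :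
    ∑ c ∈ C, #(alternatingSumFiber S c) ≤ #S ^ 3 := by
  calc ∑ c ∈ C, #(alternatingSumFiber S c)
      = #((S ×ˢ S ×ˢ S).filter fun t => t.1 - t.2.1 + t.2.2 ∈ C) :=
        sum_card_fiberwise_eq_card_filter _ _ _
    _ ≤ #(S ×ˢ S ×ˢ S) := card_filter_le _ _
    _ = #S ^ 3 := by rw [card_product, card_product]; ring

end

theorem stmt_3_general {γ : Type*} [AddCommGroup γ] [DecidableEq γ]
    (A B : Finset γ) (G : Finset (γ × γ))
    (S : Finset γ) (hS : S = G.image fun p => p.1 + p.2)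
    (A' B' : Finset γ) (K : ℝ)
    (hpaths : ∀ a' ∈ A', ∀ b' ∈ B',
      K ≤ ((((A ×ˢ B).filter fun p => (a', p.2) ∈ G ∧ p ∈ G ∧ (p.1, b') ∈ G)).card : ℝ)) :
    K * (((A' + B').card : ℝ)) ≤ ((S.card : ℝ)) ^ 3 := by
  have hfiber : ∀ c ∈ A' + B', K ≤ (#(alternatingSumFiber S c) : ℝ) := by
    intro c hc
    obtain ⟨a', ha', b', hb', rfl⟩ := mem_add.1 hc
    refine (hpaths a' ha' b' hb').trans ?_
    rw [hS]
    exact_mod_cast card_lengthThreePaths_le_card_alternatingSumFiber A B G a' b'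
  calc K * #(A' + B') = ∑ _c ∈ A' + B', K := by rw [sum_const, nsmul_eq_mul, mul_comm]
    _ ≤ ∑ c ∈ A' + B', (#(alternatingSumFiber S c) : ℝ) := sum_le_sum hfiber
    _ ≤ (#S : ℝ) ^ 3 := by exact_mod_cast sum_card_alternatingSumFiber_le S (A' + B')

/-- The counting argument deducing the BSG Theorem from the Graph Lemma: if every
`(a', b') ∈ A' × B'` is joined by at least `K` length-3 paths in `G ⊆ A × B`, and
`S = {a+b : (a,b) ∈ G}`, then `K·|A'+B'| ≤ |S|³`. -/
theorem stmt_3 {γ : Type*} [AddCommGroup γ] [DecidableEq γ]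
    (A B : Finset γ) (G : Finset (γ × γ)) (hG : G ⊆ A ×ˢ B)
    (S : Finset γ) (hS : S = G.image fun p => p.1 + p.2)
    (A' B' : Finset γ) (hA' : A' ⊆ A) (hB' : B' ⊆ B) (K : ℝ) (hK : 0 < K)
    (hpaths : ∀ a' ∈ A', ∀ b' ∈ B',
      K ≤ ((((A ×ˢ B).filter fun p => (a', p.2) ∈ G ∧ p ∈ G ∧ (p.1, b') ∈ G)).card : ℝ)) :
    K * (((A' + B').card : ℝ)) ≤ ((S.card : ℝ)) ^ 3 :=
  stmt_3_general A B G S hS A' B' K hpaths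
end

section
/- Let A and B be finite nonempty sets, let 0 < α ≤ 1, and let G ⊆ A×B with |G| ≥ α|A||B|. Let A₀ = {a ∈ A : deg_G(a) ≥ α|B|/2}. Then there exists b* ∈ B such that the set A* = {a ∈ A₀ : (a,b*) ∈ G} satisfies |A*| ≥ α|A|/4 and |{(a,a') ∈ A*×A* : cdeg_G(a,a') ≤ α³|B|/2048}| ≤ α²|A*||A|/256. -/
/-!
Choose `b*` at random in `B`. Vertices outside `A₀` carry at most `α|A||B|/2` edges, so by double
counting `∑_b |A₀ ∩ N(b)| = ∑_{a ∈ A₀} deg a ≥ α|A||B|/2`. A pair `(a, a')` of `A₀` lies in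
`A* × A*` exactly when `b*` is one of its `cdeg(a, a')` common neighbours, so summing over `b*`
the number of pairs of `A*` with codegree at most `t = α³|B|/2048` gives at most `|A|² t`.
Averaging `|A*| - 256/(α²|A|) · (number of such pairs)` over `b*`, some `b*` makes it at least
`3α|A|/8`, which yields both bounds.
-/

open Finset

section

variable {ι R : Type*} [Field R] [LinearOrder R] [IsStrictOrderedRing R]

theorem sum_sub_card_mul_le_sum_filter_le (s : Finset ι) (f : ι → R) {θ : R}
    (hθ : 0 ≤ θ) : ∑ i ∈ s, f i - #s * θ ≤ ∑ i ∈ s with θ ≤ f i, f i := by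
  have hlow : ∑ i ∈ s with ¬θ ≤ f i, f i ≤ #s * θ :=
    calc ∑ i ∈ s with ¬θ ≤ f i, f i ≤ ∑ i ∈ s with ¬θ ≤ f i, θ :=
          sum_le_sum fun i hi => (not_le.mp (mem_filter.mp hi).2).le
      _ = (#{i ∈ s | ¬θ ≤ f i} : R) * θ := by rw [sum_const, nsmul_eq_mul]
      _ ≤ #s * θ := by gcongr; exact filter_subset _ s
  linarith [sum_filter_add_sum_filter_not s (fun i => θ ≤ f i) f]

theorem exists_add_mul_le_of_sum_le {s : Finset ι} (hs : s.Nonempty) {x y : ι → R}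
    {μ c : R} (h : #s * μ + c * ∑ i ∈ s, y i ≤ ∑ i ∈ s, x i) : ∃ i ∈ s, μ + c * y i ≤ x i :=
  exists_le_of_sum_le hs (by rwa [sum_add_distrib, sum_const, nsmul_eq_mul, ← mul_sum])

end

section

variable {X Y : Type*} [DecidableEq X] [DecidableEq Y]

theorem card_eq_sum_card_filter_mem {A : Finset X} {B : Finset Y} {G : Finset (X × Y)}
    (hG : G ⊆ A ×ˢ B) : #G = ∑ a ∈ A, #{b ∈ B | (a, b) ∈ G} := by
  calc #G = #{p ∈ A ×ˢ B | p ∈ G} := by rw [filter_mem_eq_inter, inter_eq_right.mpr hG]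
    _ = ∑ a ∈ A, #{b ∈ B | (a, b) ∈ G} := by simp only [card_filter, sum_product]

theorem sub_card_mul_le_sum_card_filter_high_degree {A : Finset X} {B : Finset Y}
    {G : Finset (X × Y)} (hG : G ⊆ A ×ˢ B) {θ : ℝ} (hθ : 0 ≤ θ) :
    #G - #A * θ ≤
      ∑ b ∈ B, (#{a ∈ {a ∈ A | θ ≤ (#{b ∈ B | (a, b) ∈ G} : ℝ)} | (a, b) ∈ G} : ℝ) := by
  have hdeg : (#G : ℝ) = ∑ a ∈ A, (#{b ∈ B | (a, b) ∈ G} : ℝ) := by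
    exact_mod_cast card_eq_sum_card_filter_mem hG
  have hdc : ∑ b ∈ B, (#{a ∈ {a ∈ A | θ ≤ (#{b ∈ B | (a, b) ∈ G} : ℝ)} | (a, b) ∈ G} : ℝ) =
      ∑ a ∈ A with θ ≤ (#{b ∈ B | (a, b) ∈ G} : ℝ), (#{b ∈ B | (a, b) ∈ G} : ℝ) := by
    exact_mod_cast (sum_card_bipartiteAbove_eq_sum_card_bipartiteBelow fun a b => (a, b) ∈ G).symm
  rw [hdeg, hdc]
  exact sum_sub_card_mul_le_sum_filter_le A _ hθ

theorem sum_card_filter_codegree_le_le (S : Finset X) (B : Finset Y) (G : Finset (X × Y))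
    {t : ℝ} (ht : 0 ≤ t) :
    ∑ b ∈ B, (#{p ∈ {a ∈ S | (a, b) ∈ G} ×ˢ {a ∈ S | (a, b) ∈ G} |
        (#{b' ∈ B | (p.1, b') ∈ G ∧ (p.2, b') ∈ G} : ℝ) ≤ t} : ℝ) ≤ #S ^ 2 * t := by
  set r : X × X → Y → Prop := fun p b =>
    (p.1, b) ∈ G ∧ (p.2, b) ∈ G ∧ (#{b' ∈ B | (p.1, b') ∈ G ∧ (p.2, b') ∈ G} : ℝ) ≤ t
  have hbelow : ∀ b, {p ∈ {a ∈ S | (a, b) ∈ G} ×ˢ {a ∈ S | (a, b) ∈ G} |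
      (#{b' ∈ B | (p.1, b') ∈ G ∧ (p.2, b') ∈ G} : ℝ) ≤ t} = (S ×ˢ S).bipartiteBelow r b := by
    intro b; ext p
    simp only [bipartiteBelow, r, mem_filter, mem_product]
    tauto
  have habove : ∀ p, (#(B.bipartiteAbove r p) : ℝ) ≤ t := by
    intro p
    by_cases hp : (#{b' ∈ B | (p.1, b') ∈ G ∧ (p.2, b') ∈ G} : ℝ) ≤ t
    · simp only [bipartiteAbove, r, hp, and_true]
    · simpa only [bipartiteAbove, r, hp, and_false, filter_false, card_empty, Nat.cast_zero]
        using ht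
  calc _ = ∑ p ∈ S ×ˢ S, (#(B.bipartiteAbove r p) : ℝ) := by
        simp_rw [hbelow]
        exact_mod_cast (sum_card_bipartiteAbove_eq_sum_card_bipartiteBelow r).symm
    _ ≤ ∑ _p ∈ S ×ˢ S, t := sum_le_sum fun p _ => habove p
    _ = #S ^ 2 * t := by rw [sum_const, nsmul_eq_mul, card_product]; push_cast; ring

end

theorem stmt_4_general {X Y : Type*} [DecidableEq X] [DecidableEq Y]
    (A : Finset X) (B : Finset Y) (hA : A.Nonempty) (hB : B.Nonempty)
    (α : ℝ) (hα0 : 0 < α)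
    (G : Finset (X × Y)) (hG : G ⊆ A ×ˢ B)
    (hGcard : α * (A.card : ℝ) * (B.card : ℝ) ≤ (G.card : ℝ)) :
    ∃ bstar ∈ B, ∃ Astar : Finset X,
      Astar = (A.filter fun a =>
          α * (B.card : ℝ) / 2 ≤ ((B.filter fun b => (a, b) ∈ G).card : ℝ)).filter
        (fun a => (a, bstar) ∈ G) ∧
      α * (A.card : ℝ) / 4 ≤ (Astar.card : ℝ) ∧
      ((((Astar ×ˢ Astar).filter fun p =>
          ((B.filter fun b => (p.1, b) ∈ G ∧ (p.2, b) ∈ G).card : ℝ) ≤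
            α ^ 3 * (B.card : ℝ) / 2048).card : ℝ)
        ≤ α ^ 2 * (Astar.card : ℝ) * (A.card : ℝ) / 256) := by
  set n : ℝ := (#A : ℝ)
  set m : ℝ := (#B : ℝ)
  set A₀ := {a ∈ A | α * m / 2 ≤ (#{b ∈ B | (a, b) ∈ G} : ℝ)}
  set Astar : Y → Finset X := fun b => {a ∈ A₀ | (a, b) ∈ G}
  set bad : Y → ℝ := fun b => #{p ∈ Astar b ×ˢ Astar b |
    (#{b' ∈ B | (p.1, b') ∈ G ∧ (p.2, b') ∈ G} : ℝ) ≤ α ^ 3 * m / 2048}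
  have hn : 0 < n := Nat.cast_pos.mpr hA.card_pos
  have hA₀ : (#A₀ : ℝ) ≤ n := Nat.cast_le.mpr (card_le_card (filter_subset _ A))
  have hmass : α * n * m / 2 ≤ ∑ b ∈ B, (#(Astar b) : ℝ) := by
    have := sub_card_mul_le_sum_card_filter_high_degree hG (θ := α * m / 2) (by positivity)
    linarith
  have hbad : ∑ b ∈ B, bad b ≤ #A₀ ^ 2 * (α ^ 3 * m / 2048) :=
    sum_card_filter_codegree_le_le A₀ B G (by positivity)
  have hweighted : #B * (3 * α * n / 8) + 256 / (α ^ 2 * n) * ∑ b ∈ B, bad b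
      ≤ ∑ b ∈ B, (#(Astar b) : ℝ) := by
    have hc : 256 / (α ^ 2 * n) * (n ^ 2 * (α ^ 3 * m / 2048)) = α * n * m / 8 := by
      field_simp; ring
    have hbad' : 256 / (α ^ 2 * n) * ∑ b ∈ B, bad b ≤ α * n * m / 8 := by
      rw [← hc]; gcongr; exact hbad.trans (by gcongr)
    linarith
  obtain ⟨b, hb, hbig⟩ := exists_add_mul_le_of_sum_le hB hweighted
  have hbad_nonneg : 0 ≤ 256 / (α ^ 2 * n) * bad b := by positivity
  refine ⟨b, hb, Astar b, rfl, by linarith, ?_⟩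
  have hfew : 256 / (α ^ 2 * n) * bad b ≤ #(Astar b) := by
    linarith [show 0 ≤ 3 * α * n / 8 by positivity]
  rw [div_mul_eq_mul_div, div_le_iff₀ (by positivity)] at hfew
  show bad b ≤ α ^ 2 * #(Astar b) * n / 256
  linarith

/-- The probabilistic step in the proof of the Graph Lemma: with
`A₀ = {a ∈ A : deg_G(a) ≥ α|B|/2}`, there exists `b* ∈ B` such that
`A* = A₀ ∩ N_G(b*)` satisfies `|A*| ≥ α|A|/4` and the set of pairs of `A*` with
small common degree (`cdeg_G(a,a') ≤ α³|B|/2048`) has size at most `α²|A*||A|/256`. -/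
theorem stmt_4 {X Y : Type*} [DecidableEq X] [DecidableEq Y]
    (A : Finset X) (B : Finset Y) (hA : A.Nonempty) (hB : B.Nonempty)
    (α : ℝ) (hα0 : 0 < α) (hα1 : α ≤ 1)
    (G : Finset (X × Y)) (hG : G ⊆ A ×ˢ B)
    (hGcard : α * (A.card : ℝ) * (B.card : ℝ) ≤ (G.card : ℝ)) :
    ∃ bstar ∈ B, ∃ Astar : Finset X,
      Astar = (A.filter fun a =>
          α * (B.card : ℝ) / 2 ≤ ((B.filter fun b => (a, b) ∈ G).card : ℝ)).filter
        (fun a => (a, bstar) ∈ G) ∧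
      α * (A.card : ℝ) / 4 ≤ (Astar.card : ℝ) ∧
      ((((Astar ×ˢ Astar).filter fun p =>
          ((B.filter fun b => (p.1, b) ∈ G ∧ (p.2, b) ∈ G).card : ℝ) ≤
            α ^ 3 * (B.card : ℝ) / 2048).card : ℝ)
        ≤ α ^ 2 * (Astar.card : ℝ) * (A.card : ℝ) / 256) :=
  stmt_4_general A B hA hB α hα0 G hG hGcard
end

section
/- Let A and B be finite sets, 0 < α ≤ 1, and G ⊆ A×B. Suppose A* ⊆ A satisfies |A*| ≥ α|A|/4, and let BAD* = {(a,a') ∈ A*×A* : cdeg_G(a,a') ≤ α³|B|/2048}, with |BAD*| ≤ α²|A*||A|/256. Define A' = {a ∈ A* : |{a' ∈ A* : (a,a') ∈ BAD*}| ≤ α²|A|/64} and B' = {b ∈ B : |{a ∈ A' : (a,b) ∈ G}| ≥ α|A'|/4}. Then |A'| ≥ |A*|/2 ≥ α|A|/8, and for every a' ∈ A' and b' ∈ B', the number of pairs (a,b) ∈ A×B with (a',b) ∈ G, (a,b) ∈ G, and (a,b') ∈ G is at least (α²|A|/64)·(α³|B|/2048) = α⁵|A||B|/2¹⁷. -/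
/-!
Few vertices of `A*` have many bad partners: a vertex of `BAD*`-degree above `α²|A|/64` uses up
that many of the at most `α²|A*||A|/256` bad pairs, so at most a quarter of `A*` is discarded.
Given `a' ∈ A'` and `b' ∈ B'`, the neighbourhood of `b'` in `A'` has at least
`α|A'|/4 ≥ α²|A|/32` elements, of which at most `α²|A|/64` are bad partners of `a'`. Each of the
remaining `α²|A|/64` vertices `a` has more than `α³|B|/2048` common neighbours `b` with `a'`, and
each such `b` gives the path `a' – b – a – b'`.
-/

open Finset

section

variable {X Y : Type*}

theorem card_mul_le_card_of_forall_mem {S : Finset X} {f : X → Finset Y} {T : Finset (X × Y)}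
    {c : ℝ} (hT : ∀ a ∈ S, ∀ b ∈ f a, (a, b) ∈ T) (hc : ∀ a ∈ S, c ≤ #(f a)) :
    #S * c ≤ #T := by
  have hsigma : #(S.sigma f) ≤ #T := by
    refine card_le_card_of_injOn (fun p => (p.1, p.2)) (fun p hp => ?_) ?_
    · obtain ⟨ha, hb⟩ := mem_sigma.mp hp
      exact hT _ ha _ hb
    · rintro ⟨a, b⟩ - ⟨a', b'⟩ - h
      obtain ⟨rfl, rfl⟩ := Prod.mk.inj h
      rfl
  calc #S * c = ∑ _a ∈ S, c := by rw [sum_const, nsmul_eq_mul]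
    _ ≤ ∑ a ∈ S, (#(f a) : ℝ) := sum_le_sum hc
    _ ≤ #T := by rw [card_sigma] at hsigma; exact_mod_cast hsigma

theorem half_card_le_card_filter_card_le [DecidableEq X] [DecidableEq Y] {S : Finset X}
    {U : Finset Y} {R : Finset (X × Y)} {t : ℝ} (ht : 0 < t) (hR : #R ≤ t * #S / 2) :
    (#S : ℝ) / 2 ≤ #(S.filter fun a => (#(U.filter fun b => (a, b) ∈ R) : ℝ) ≤ t) := by
  set H := S.filter fun a => ¬ (#(U.filter fun b => (a, b) ∈ R) : ℝ) ≤ t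
  have hH : #H * t ≤ #R :=
    card_mul_le_card_of_forall_mem (fun _ _ _ hb => (mem_filter.mp hb).2)
      fun _ ha => (not_le.mp (mem_filter.mp ha).2).le
  have hH' : (#H : ℝ) ≤ #S / 2 :=
    le_of_mul_le_mul_right (by linarith) ht
  have hsplit : (#(S.filter fun a => (#(U.filter fun b => (a, b) ∈ R) : ℝ) ≤ t) : ℝ) + #H
      = #S := by exact_mod_cast card_filter_add_card_filter_not _
  linarith

theorem card_mul_le_card_paths [DecidableEq X] [DecidableEq Y] {A : Finset X} {B : Finset Y}
    {G : Finset (X × Y)} (hG : G ⊆ A ×ˢ B) {a' : X} {b' : Y} {S : Finset X} {c : ℝ}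
    (hS : ∀ a ∈ S, (a, b') ∈ G)
    (hc : ∀ a ∈ S, c ≤ #(B.filter fun b => (a', b) ∈ G ∧ (a, b) ∈ G)) :
    #S * c ≤ #((A ×ˢ B).filter fun p => (a', p.2) ∈ G ∧ p ∈ G ∧ (p.1, b') ∈ G) := by
  refine card_mul_le_card_of_forall_mem (fun a ha b hb => ?_) hc
  obtain ⟨-, ha'b, hab⟩ := mem_filter.mp hb
  exact mem_filter.mpr ⟨hG hab, ha'b, hab, hS a ha⟩

end

theorem stmt_5_general {X Y : Type*} [DecidableEq X] [DecidableEq Y]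
    (A : Finset X) (B : Finset Y) (α : ℝ) (hα0 : 0 < α)
    (G : Finset (X × Y)) (hG : G ⊆ A ×ˢ B)
    (Astar : Finset X) (hAstarA : Astar ⊆ A)
    (hAstar : α * (A.card : ℝ) / 4 ≤ (Astar.card : ℝ))
    (BAD : Finset (X × X))
    (hBAD : BAD = (Astar ×ˢ Astar).filter fun p =>
      ((B.filter fun b => (p.1, b) ∈ G ∧ (p.2, b) ∈ G).card : ℝ) ≤
        α ^ 3 * (B.card : ℝ) / 2048)
    (hBADcard : (BAD.card : ℝ) ≤ α ^ 2 * (Astar.card : ℝ) * (A.card : ℝ) / 256)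
    (A' : Finset X)
    (hA' : A' = Astar.filter fun a =>
      ((Astar.filter fun a' => (a, a') ∈ BAD).card : ℝ) ≤ α ^ 2 * (A.card : ℝ) / 64)
    (B' : Finset Y)
    (hB' : B' = B.filter fun b =>
      α * (A'.card : ℝ) / 4 ≤ ((A'.filter fun a => (a, b) ∈ G).card : ℝ)) :
    (Astar.card : ℝ) / 2 ≤ (A'.card : ℝ) ∧
    α * (A.card : ℝ) / 8 ≤ (Astar.card : ℝ) / 2 ∧
    ∀ a' ∈ A', ∀ b' ∈ B',
      α ^ 5 * (A.card : ℝ) * (B.card : ℝ) / 2 ^ 17 ≤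
        ((((A ×ˢ B).filter fun p => (a', p.2) ∈ G ∧ p ∈ G ∧ (p.1, b') ∈ G)).card : ℝ) := by
  have hA'A : A' ⊆ Astar := hA' ▸ filter_subset _ _
  have hA'card : (#Astar : ℝ) / 2 ≤ #A' := by
    rcases Astar.eq_empty_or_nonempty with rfl | hne
    · simp
    have hA : (0 : ℝ) < #A := by exact_mod_cast (hne.mono hAstarA).card_pos
    rw [hA']
    refine half_card_le_card_filter_card_le (by positivity) ?_
    have : 0 ≤ α ^ 2 * #Astar * #A := by positivity
    linarith
  refine ⟨hA'card, by linarith, fun a' ha' b' hb' => ?_⟩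
  obtain ⟨ha'A, ha'bad⟩ := mem_filter.mp (hA' ▸ ha')
  have hb'deg := (mem_filter.mp (hB' ▸ hb')).2
  set N := A'.filter fun a => (a, b') ∈ G
  set Good := N.filter fun a => (a', a) ∉ BAD
  have hGood : α ^ 2 * #A / 64 ≤ #Good := by
    have hsplit : (#(N.filter fun a => (a', a) ∈ BAD) : ℝ) + #Good = #N := by
      exact_mod_cast card_filter_add_card_filter_not _
    have hbad : (#(N.filter fun a => (a', a) ∈ BAD) : ℝ) ≤
        #(Astar.filter fun a => (a', a) ∈ BAD) := by
      exact_mod_cast card_le_card (filter_subset_filter _ ((filter_subset _ _).trans hA'A))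
    have hN : α * (α * #A / 8) / 4 ≤ α * #A' / 4 := by gcongr; linarith
    linarith
  have hpaths := card_mul_le_card_paths hG (S := Good) (c := α ^ 3 * #B / 2048)
    (fun a ha => (mem_filter.mp (mem_filter.mp ha).1).2) fun a ha => by
      obtain ⟨haN, ha'a⟩ := mem_filter.mp ha
      have haA : a ∈ Astar := hA'A (mem_filter.mp haN).1
      by_contra! hlt
      exact ha'a (hBAD ▸ mem_filter.mpr ⟨mem_product.mpr ⟨ha'A, haA⟩, hlt.le⟩)
  calc α ^ 5 * (#A : ℝ) * #B / 2 ^ 17 = α ^ 2 * #A / 64 * (α ^ 3 * #B / 2048) := by ring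
    _ ≤ #Good * (α ^ 3 * #B / 2048) := by gcongr
    _ ≤ _ := hpaths

/-- The deterministic step in the proof of the Graph Lemma: given `A* ⊆ A` with
`|A*| ≥ α|A|/4` and with few bad pairs (pairs of small common degree), the sets
`A' = {a ∈ A* : deg_{BAD*}(a) ≤ α²|A|/64}` and
`B' = {b ∈ B : deg_{G ∩ (A'×B)}(b) ≥ α|A'|/4}` satisfy `|A'| ≥ |A*|/2 ≥ α|A|/8`,
and every `(a', b') ∈ A' × B'` is joined by at least
`(α²|A|/64)·(α³|B|/2048) = α⁵|A||B|/2¹⁷` length-3 paths in `G`. -/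
theorem stmt_5 {X Y : Type*} [DecidableEq X] [DecidableEq Y]
    (A : Finset X) (B : Finset Y) (α : ℝ) (hα0 : 0 < α) (hα1 : α ≤ 1)
    (G : Finset (X × Y)) (hG : G ⊆ A ×ˢ B)
    (Astar : Finset X) (hAstarA : Astar ⊆ A)
    (hAstar : α * (A.card : ℝ) / 4 ≤ (Astar.card : ℝ))
    (BAD : Finset (X × X))
    (hBAD : BAD = (Astar ×ˢ Astar).filter fun p =>
      ((B.filter fun b => (p.1, b) ∈ G ∧ (p.2, b) ∈ G).card : ℝ) ≤
        α ^ 3 * (B.card : ℝ) / 2048)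
    (hBADcard : (BAD.card : ℝ) ≤ α ^ 2 * (Astar.card : ℝ) * (A.card : ℝ) / 256)
    (A' : Finset X)
    (hA' : A' = Astar.filter fun a =>
      ((Astar.filter fun a' => (a, a') ∈ BAD).card : ℝ) ≤ α ^ 2 * (A.card : ℝ) / 64)
    (B' : Finset Y)
    (hB' : B' = B.filter fun b =>
      α * (A'.card : ℝ) / 4 ≤ ((A'.filter fun a => (a, b) ∈ G).card : ℝ)) :
    (Astar.card : ℝ) / 2 ≤ (A'.card : ℝ) ∧
    α * (A.card : ℝ) / 8 ≤ (Astar.card : ℝ) / 2 ∧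
    ∀ a' ∈ A', ∀ b' ∈ B',
      α ^ 5 * (A.card : ℝ) * (B.card : ℝ) / 2 ^ 17 ≤
        ((((A ×ˢ B).filter fun p => (a', p.2) ∈ G ∧ p ∈ G ∧ (p.1, b') ∈ G)).card : ℝ) :=
  stmt_5_general A B α hα0 G hG Astar hAstarA hAstar BAD hBAD hBADcard A' hA' B' hB'
end

section
/- Let M > 0, c > 0, and 0 < α ≤ 1 be real numbers, and let g₁, g₂, …, g_k be positive real numbers with g₁ ≤ M, with g_{i+1} ≤ g_i·(1 − c·g_i/M) for every 1 ≤ i < k, and with g_k ≥ αM. Then k ≤ 1 + 1/(cα). -/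
/-!
Pass to reciprocals: since `1 / (1 - x) ≥ 1 + x`, the recursion `g_{i+1} ≤ g_i (1 - c g_i / M)`
makes `M / g_i` grow by at least `c` at each step. It starts at `M / g₁ ≥ 1` and ends at
`M / g_k ≤ 1 / α`, so there are at most `1 / (c α)` steps.
-/

lemma inv_add_le_inv_of_le_mul_one_sub {x y t : ℝ} (hx : 0 < x) (hy : 0 < y)
    (h : y ≤ x * (1 - t * x)) : x⁻¹ + t ≤ y⁻¹ := by
  have hfactor : 0 < 1 - t * x := pos_of_mul_pos_right (hy.trans_le h) hx.le
  calc x⁻¹ + t = (1 + t * x) / x := by field_simp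
    _ ≤ 1 / (x * (1 - t * x)) := by
        rw [div_le_div_iff₀ hx (by positivity)]
        nlinarith [sq_nonneg (t * x)]
    _ ≤ y⁻¹ := one_div (x * (1 - t * x)) ▸ inv_anti₀ hy h

lemma add_mul_sub_le_of_forall_add_le_succ {u : ℕ → ℝ} {t : ℝ} {a n : ℕ} (han : a ≤ n)
    (hstep : ∀ i, a ≤ i → i < n → u i + t ≤ u (i + 1)) : u a + t * ((n : ℝ) - a) ≤ u n := by
  induction n, han using Nat.le_induction with
  | base => simp
  | succ n han ih =>
    have hprev := ih fun i hai hin => hstep i hai (hin.trans n.lt_succ_self)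
    have hlast := hstep n han n.lt_succ_self
    push_cast
    linarith

theorem stmt_7_general (M c α : ℝ) (hM : 0 < M) (hc : 0 < c) (hα0 : 0 < α)
    (k : ℕ) (hk : 1 ≤ k) (g : ℕ → ℝ)
    (hpos : ∀ i, 1 ≤ i → i ≤ k → 0 < g i)
    (hg1 : g 1 ≤ M)
    (hstep : ∀ i, 1 ≤ i → i < k → g (i + 1) ≤ g i * (1 - c * g i / M))
    (hgk : α * M ≤ g k) :
    (k : ℝ) ≤ 1 + 1 / (c * α) := by
  have hgrowth : (g 1)⁻¹ + c / M * ((k : ℝ) - 1) ≤ (g k)⁻¹ := by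
    have := add_mul_sub_le_of_forall_add_le_succ (u := fun i => (g i)⁻¹) (t := c / M) hk
      fun i h1i hik => inv_add_le_inv_of_le_mul_one_sub (hpos i h1i hik.le)
        (hpos (i + 1) (by omega) hik) (by rw [div_mul_eq_mul_div]; exact hstep i h1i hik)
    exact_mod_cast this
  have hstart : M⁻¹ ≤ (g 1)⁻¹ := inv_anti₀ (hpos 1 le_rfl hk) hg1
  have hend : (g k)⁻¹ ≤ α⁻¹ * M⁻¹ := mul_inv α M ▸ inv_anti₀ (by positivity) hgk
  have hsteps : 1 + c * ((k : ℝ) - 1) ≤ α⁻¹ := by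
    refine le_of_mul_le_mul_right ?_ (inv_pos.2 hM)
    linear_combination hstart + hgrowth + hend
  rw [← sub_le_iff_le_add', le_div_iff₀ (by positivity)]
  have := mul_le_mul_of_nonneg_right hsteps hα0.le
  rw [inv_mul_cancel₀ hα0.ne'] at this
  linarith

/-- The refined iteration analysis in the proof of the BSG Corollary: if positive
reals `g₁, …, g_k` satisfy `g₁ ≤ M`, `g_{i+1} ≤ g_i(1 − c·g_i/M)` for `1 ≤ i < k`,
and `g_k ≥ αM`, then `k ≤ 1 + 1/(cα)`. -/
theorem stmt_7 (M c α : ℝ) (hM : 0 < M) (hc : 0 < c) (hα0 : 0 < α) (hα1 : α ≤ 1)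
    (k : ℕ) (hk : 1 ≤ k) (g : ℕ → ℝ)
    (hpos : ∀ i, 1 ≤ i → i ≤ k → 0 < g i)
    (hg1 : g 1 ≤ M)
    (hstep : ∀ i, 1 ≤ i → i < k → g (i + 1) ≤ g i * (1 - c * g i / M))
    (hgk : α * M ≤ g k) :
    (k : ℝ) ≤ 1 + 1 / (c * α) :=
  stmt_7_general M c α hM hc hα0 k hk g hpos hg1 hstep hgk
end

section
/- There is an absolute constant c > 0 with the following property. For every integer ℓ ≥ 1, every integer U ≥ 2, and every finite set T ⊆ {0, 1, …, U−1} with |T| = N ≥ 2, there exists a family F of at most c·2^ℓ·log₂ N tuples (p₁, …, p_ℓ) of primes, each prime at most c·N^{1/ℓ}·(log₂ U)², such that for every x ∈ T there is a tuple (p₁, …, p_ℓ) ∈ F with: no y ∈ T with y ≠ x satisfies y ≡ x (mod p_j) for all j = 1, …, ℓ. -/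
/-!
Let `L = log₂ U`, `A = ⌈N^{1/ℓ}⌉`, `n = 2AL`, and let `P` be the set of primes up to
`16 n (log₂ n + 1) ≤ 128·A·L²`; by Chebyshev's bound `|P| ≥ n`. Two distinct elements of `T`
agree modulo at most `L` primes (each divides their nonzero difference, which is `< U`), so for
fixed `x ≠ y` at most `L^ℓ` of the `|P|^ℓ ≥ 2^ℓ A^ℓ L^ℓ ≥ 2N L^ℓ` tuples in `P^ℓ` fail to
separate them. By the union bound, every `x ∈ T` is isolated by at least half of all tuples.
Averaging then yields a tuple isolating at least half of any given subset of `T`, and greedily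
discarding the elements it isolates covers `T` with `log₂ N + 1` tuples.
-/

open Finset
open scoped Nat.Prime

namespace Nat

theorem card_primeFactors_le_log {d : ℕ} (hd : d ≠ 0) : #d.primeFactors ≤ log 2 d := by
  refine le_log_of_pow_le one_lt_two ?_
  calc 2 ^ #d.primeFactors = ∏ _p ∈ d.primeFactors, 2 := (prod_const 2).symm
    _ ≤ ∏ p ∈ d.primeFactors, p :=
      prod_le_prod' fun p hp => (prime_of_mem_primeFactors hp).two_le
    _ ≤ d := le_of_dvd (pos_of_ne_zero hd) (prod_primeFactors_dvd d)

theorem lcmUpto_le_pow_primeCounting (n : ℕ) : lcmUpto n ≤ n ^ π n := by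
  rw [lcmUpto_eq_prod_pow_log, ← primesLE_card_eq_primeCounting, ← prod_const]
  exact prod_le_prod' fun p hp =>
    pow_log_le_self p (by have := two_le_of_mem_primesLE hp; have := le_of_mem_primesLE hp; omega)

theorem le_primeCounting_add_one_mul_log (n : ℕ) : n ≤ (π n + 1) * (log 2 n + 1) := by
  have hn : n < 2 ^ (log 2 n + 1) := lt_pow_succ_log_self one_lt_two n
  refine (Nat.pow_le_pow_iff_right one_lt_two).1 ?_
  calc 2 ^ n ≤ (n + 1) * lcmUpto n := Chebyshev.two_pow_le_mul_lcmUpto n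
    _ ≤ 2 ^ (log 2 n + 1) * (2 ^ (log 2 n + 1)) ^ π n := by
      gcongr
      · exact hn
      · exact (lcmUpto_le_pow_primeCounting n).trans (Nat.pow_le_pow_left hn.le _)
    _ = 2 ^ ((π n + 1) * (log 2 n + 1)) := by ring

theorem le_primeCounting_sixteen_mul (n : ℕ) : n ≤ π (16 * n * (log 2 n + 1)) := by
  set K := log 2 n + 1
  set M := 16 * n * K
  by_contra! h
  have hn : n < 2 ^ K := lt_pow_succ_log_self one_lt_two n
  have hK : K < 2 ^ K := Nat.lt_two_pow_self
  have hnK : 0 < n * K := Nat.mul_pos (by omega) (succ_pos _)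
  have hM : log 2 M < 2 * K + 4 := by
    refine log_lt_of_lt_pow (by simp only [M, mul_assoc]; omega) ?_
    calc 16 * n * K = 2 ^ 4 * (n * K) := by ring
      _ < 2 ^ 4 * (2 ^ K * 2 ^ K) := by gcongr
      _ = 2 ^ (2 * K + 4) := by ring
  have : M < M := calc
    M ≤ (π M + 1) * (log 2 M + 1) := le_primeCounting_add_one_mul_log M
    _ ≤ n * (6 * K) := Nat.mul_le_mul (by omega) (by omega)
    _ < 16 * n * K := by linarith
  exact lt_irrefl M this

end Nat

section Covering

variable {α β : Type*} (r : α → β → Prop) [∀ a b, Decidable (r a b)] {Q : Finset α}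

theorem Finset.exists_le_two_mul_card_filter (hQ : Q.Nonempty) {S : Finset β}
    (hS : ∀ x ∈ S, #Q ≤ 2 * #{q ∈ Q | r q x}) : ∃ q ∈ Q, #S ≤ 2 * #{x ∈ S | r q x} := by
  refine exists_le_of_sum_le hQ ?_
  calc ∑ _q ∈ Q, #S = ∑ _x ∈ S, #Q := by simp only [sum_const, smul_eq_mul, mul_comm]
    _ ≤ ∑ x ∈ S, 2 * #{q ∈ Q | r q x} := sum_le_sum hS
    _ = ∑ q ∈ Q, 2 * #{x ∈ S | r q x} := by
      simp only [← mul_sum]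
      exact congrArg _ (sum_card_bipartiteAbove_eq_sum_card_bipartiteBelow r).symm

theorem Finset.exists_cover_card_le_log [DecidableEq α] (hQ : Q.Nonempty)
    (S : Finset β) (hS : ∀ x ∈ S, #Q ≤ 2 * #{q ∈ Q | r q x}) :
    ∃ F ⊆ Q, #F ≤ Nat.log 2 #S + 1 ∧ ∀ x ∈ S, ∃ q ∈ F, r q x := by
  induction S using Finset.strongInduction with
  | H S ih =>
  obtain ⟨q, hqQ, hq⟩ := exists_le_two_mul_card_filter r hQ hS
  set S' := {x ∈ S | ¬ r q x}
  have hS' : #{x ∈ S | r q x} + #S' = #S := card_filter_add_card_filter_not _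
  rcases S'.eq_empty_or_nonempty with hS'e | hS'ne
  · exact ⟨{q}, singleton_subset_iff.2 hqQ, by simp,
      fun x hx => ⟨q, mem_singleton_self q, not_not.1 (filter_eq_empty_iff.1 hS'e hx)⟩⟩
  have hS'S : S' ⊂ S := by
    have := hS'ne.card_pos
    obtain ⟨x, hx⟩ := card_pos.1 (show 0 < #{x ∈ S | r q x} by omega)
    exact filter_ssubset.2 ⟨x, mem_of_mem_filter x hx, not_not.2 (mem_filter.1 hx).2⟩
  obtain ⟨F, hFQ, hFcard, hF⟩ := ih S' hS'S fun x hx => hS x (mem_of_mem_filter x hx)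
  refine ⟨insert q F, insert_subset hqQ hFQ, ?_, fun x hx => ?_⟩
  · have : Nat.log 2 #S' + 1 ≤ Nat.log 2 #S := by
      rw [← Nat.log_mul_base one_lt_two hS'ne.card_pos.ne']
      exact Nat.log_mono_right (by omega)
    have := card_insert_le q F
    omega
  · by_cases hqx : r q x
    · exact ⟨q, mem_insert_self q F, hqx⟩
    · obtain ⟨p, hpF, hpx⟩ := hF x (mem_filter.2 ⟨hx, hqx⟩)
      exact ⟨p, mem_insert_of_mem hpF, hpx⟩

end Covering

def IsolatedBy {ι : Type*} (T : Finset ℕ) (x : ℕ) (q : ι → ℕ) : Prop :=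
  ∀ y ∈ T, y ≠ x → ¬ ∀ i, y % q i = x % q i

instance {ι : Type*} [Fintype ι] (T : Finset ℕ) (x : ℕ) :
    DecidablePred (IsolatedBy (ι := ι) T x) :=
  fun _ => by unfold IsolatedBy; infer_instance

section Hashing

variable {ι : Type*} [Fintype ι] [DecidableEq ι] {P : Finset ℕ}

theorem card_filter_mod_eq_le_log (hP : ∀ p ∈ P, p.Prime) {x y : ℕ} (hxy : x ≠ y) :
    #{p ∈ P | y % p = x % p} ≤ Nat.log 2 (max x y) := by
  wlog h : x < y generalizing x y
  · rw [max_comm]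
    simpa only [eq_comm] using this hxy.symm (by omega)
  calc #{p ∈ P | y % p = x % p} ≤ #(y - x).primeFactors := card_le_card fun p hp => ?_
    _ ≤ Nat.log 2 (y - x) := Nat.card_primeFactors_le_log (by omega)
    _ ≤ Nat.log 2 (max x y) := Nat.log_mono_right (by omega)
  rw [mem_filter] at hp
  exact Nat.mem_primeFactors.2 ⟨hP p hp.1, (Nat.modEq_iff_dvd' h.le).1 hp.2.symm, by omega⟩

theorem card_filter_piFinset_mod_eq_le_log (hP : ∀ p ∈ P, p.Prime) {x y : ℕ} (hxy : x ≠ y) :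
    #{q ∈ Fintype.piFinset fun _ : ι => P | ∀ i, y % q i = x % q i} ≤
      Nat.log 2 (max x y) ^ Fintype.card ι := by
  calc _ ≤ #(Fintype.piFinset fun _ : ι => {p ∈ P | y % p = x % p}) :=
        card_le_card fun q hq => by
        simp only [mem_filter, Fintype.mem_piFinset] at hq ⊢
        exact fun i => ⟨hq.1 i, hq.2 i⟩
    _ = #{p ∈ P | y % p = x % p} ^ Fintype.card ι := by simp
    _ ≤ _ := Nat.pow_le_pow_left (card_filter_mod_eq_le_log hP hxy) _

variable {T : Finset ℕ} {L x : ℕ}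

theorem card_filter_not_isolatedBy_le (hP : ∀ p ∈ P, p.Prime) (hTL : ∀ y ∈ T, Nat.log 2 y ≤ L)
    (hx : x ∈ T) :
    #{q ∈ Fintype.piFinset fun _ : ι => P | ¬ IsolatedBy T x q} ≤
      (#T - 1) * L ^ Fintype.card ι := by
  calc _ ≤ #((T.erase x).biUnion fun y =>
          {q ∈ Fintype.piFinset fun _ : ι => P | ∀ i, y % q i = x % q i}) := by
        refine card_le_card fun q hq => ?_
        obtain ⟨hqP, hq⟩ := mem_filter.1 hq
        unfold IsolatedBy at hq
        push Not at hq
        obtain ⟨y, hyT, hyx, hyq⟩ := hq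
        exact mem_biUnion.2 ⟨y, mem_erase.2 ⟨hyx, hyT⟩, mem_filter.2 ⟨hqP, hyq⟩⟩
    _ ≤ ∑ y ∈ T.erase x, #{q ∈ Fintype.piFinset fun _ : ι => P | ∀ i, y % q i = x % q i} :=
        card_biUnion_le
    _ ≤ ∑ _y ∈ T.erase x, L ^ Fintype.card ι := sum_le_sum fun y hy => by
        obtain ⟨hyx, hyT⟩ := mem_erase.1 hy
        refine (card_filter_piFinset_mod_eq_le_log hP hyx.symm).trans (Nat.pow_le_pow_left ?_ _)
        rw [Nat.log_monotone.map_max]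
        exact max_le (hTL x hx) (hTL y hyT)
    _ = (#T - 1) * L ^ Fintype.card ι := by rw [sum_const, card_erase_of_mem hx, smul_eq_mul]

theorem card_piFinset_le_two_mul_card_filter_isolatedBy (hP : ∀ p ∈ P, p.Prime)
    (hTL : ∀ y ∈ T, Nat.log 2 y ≤ L) (hTP : 2 * #T * L ^ Fintype.card ι ≤ #P ^ Fintype.card ι)
    (hx : x ∈ T) :
    #(Fintype.piFinset fun _ : ι => P) ≤
      2 * #{q ∈ Fintype.piFinset fun _ : ι => P | IsolatedBy T x q} := by
  have hsplit : #{q ∈ Fintype.piFinset fun _ : ι => P | IsolatedBy T x q} +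
      #{q ∈ Fintype.piFinset fun _ : ι => P | ¬ IsolatedBy T x q} =
      #(Fintype.piFinset fun _ : ι => P) := card_filter_add_card_filter_not _
  have hbad := card_filter_not_isolatedBy_le hP hTL hx (ι := ι)
  have : 2 * ((#T - 1) * L ^ Fintype.card ι) ≤ 2 * #T * L ^ Fintype.card ι := by
    rw [mul_assoc]; gcongr; omega
  have : #(Fintype.piFinset fun _ : ι => P) = #P ^ Fintype.card ι := by simp
  omega

end Hashing

theorem exists_isolating_family {ι : Type*} [Fintype ι] [DecidableEq ι] {T : Finset ℕ}
    {U A : ℕ} (hU : 2 ≤ U) (hTU : ∀ x ∈ T, x < U) (hA : 1 ≤ A) (hAU : A ≤ U)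
    (hTA : 2 * #T ≤ (2 * A) ^ Fintype.card ι) :
    ∃ F : Finset (ι → ℕ), #F ≤ Nat.log 2 #T + 1 ∧
      (∀ q ∈ F, ∀ i, (q i).Prime ∧ q i ≤ 128 * A * Nat.log 2 U ^ 2) ∧
      ∀ x ∈ T, ∃ q ∈ F, IsolatedBy T x q := by
  set L := Nat.log 2 U
  have hL : 1 ≤ L := Nat.le_log_of_pow_le one_lt_two (by simpa using hU)
  set n := 2 * A * L
  have hlog_n : Nat.log 2 n + 1 ≤ 4 * L := by
    have hA' : A < 2 ^ (L + 1) := hAU.trans_lt (Nat.lt_pow_succ_log_self one_lt_two U)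
    have : Nat.log 2 n < 2 * L + 2 := by
      refine Nat.log_lt_of_lt_pow (by positivity) ?_
      calc 2 * A * L < 2 * 2 ^ (L + 1) * 2 ^ L := by gcongr; exact Nat.lt_two_pow_self
        _ = 2 ^ (2 * L + 2) := by ring
    omega
  set P := Nat.primesLE (16 * n * (Nat.log 2 n + 1))
  have hP : ∀ p ∈ P, p.Prime := fun p => Nat.prime_of_mem_primesLE
  have hnP : n ≤ #P := by
    rw [Nat.primesLE_card_eq_primeCounting]; exact Nat.le_primeCounting_sixteen_mul n
  have hTP : 2 * #T * L ^ Fintype.card ι ≤ #P ^ Fintype.card ι := calc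
    2 * #T * L ^ Fintype.card ι ≤ (2 * A) ^ Fintype.card ι * L ^ Fintype.card ι := by gcongr
    _ = n ^ Fintype.card ι := (mul_pow _ _ _).symm
    _ ≤ #P ^ Fintype.card ι := by gcongr
  have hQ : (Fintype.piFinset fun _ : ι => P).Nonempty := Fintype.piFinset_nonempty.2 fun _ =>
    card_pos.1 ((Nat.mul_pos (Nat.mul_pos two_pos hA) hL).trans_le hnP)
  have hTL : ∀ y ∈ T, Nat.log 2 y ≤ L := fun y hy => Nat.log_mono_right (hTU y hy).le
  obtain ⟨F, hFQ, hFcard, hFT⟩ := exists_cover_card_le_log (fun q x => IsolatedBy T x q) hQ T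
    fun x hx => card_piFinset_le_two_mul_card_filter_isolatedBy hP hTL hTP hx
  refine ⟨F, hFcard, fun q hq i => ?_, hFT⟩
  obtain ⟨hqi, hqi_prime⟩ := Nat.mem_primesLE.1 (Fintype.mem_piFinset.1 (hFQ hq) i)
  refine ⟨hqi_prime, hqi.trans ?_⟩
  calc 16 * n * (Nat.log 2 n + 1) ≤ 16 * n * (4 * L) := by gcongr
    _ = 128 * A * L ^ 2 := by ring

theorem Nat.le_ceil_rpow_one_div_pow (N : ℕ) {ℓ : ℕ} (hℓ : ℓ ≠ 0) :
    N ≤ ⌈(N : ℝ) ^ ((1 : ℝ) / ℓ)⌉₊ ^ ℓ := by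
  have hroot : ((N : ℝ) ^ ((1 : ℝ) / ℓ)) ^ ℓ = N := by
    rw [one_div, Real.rpow_inv_natCast_pow (Nat.cast_nonneg N) hℓ]
  exact_mod_cast hroot ▸ pow_le_pow_left₀ (by positivity) (Nat.le_ceil _) ℓ

theorem Nat.ceil_rpow_one_div_le (N : ℕ) {ℓ : ℕ} (hℓ : 1 ≤ ℓ) :
    ⌈(N : ℝ) ^ ((1 : ℝ) / ℓ)⌉₊ ≤ N := by
  rcases N.eq_zero_or_pos with rfl | hN
  · rw [Nat.cast_zero, Real.zero_rpow (one_div_pos.2 (by exact_mod_cast hℓ)).ne']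
    simp
  refine Nat.ceil_le.2 ?_
  calc (N : ℝ) ^ ((1 : ℝ) / ℓ) ≤ (N : ℝ) ^ (1 : ℝ) :=
        Real.rpow_le_rpow_of_exponent_le (by exact_mod_cast hN)
          (div_le_one_of_le₀ (by exact_mod_cast hℓ) (by positivity))
    _ = N := Real.rpow_one _

theorem Nat.log_add_one_le_two_mul_logb {N : ℕ} (hN : 2 ≤ N) :
    (Nat.log 2 N + 1 : ℝ) ≤ 2 * Real.logb 2 N := by
  have h1 : (1 : ℝ) ≤ Nat.log 2 N := by
    exact_mod_cast Nat.le_log_of_pow_le one_lt_two (by simpa using hN)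
  have h2 := Real.natLog_le_logb N 2
  push_cast at h2
  linarith

/-- The deterministic hash-family construction underlying the derandomized FFT Lemma:
there is an absolute constant `c > 0` so that for every `ℓ ≥ 1`, `U ≥ 2` and
`T ⊆ [U]` with `|T| = N ≥ 2`, there is a family of at most `c·2^ℓ·log₂ N` tuples
`(p₁, …, p_ℓ)` of primes, each prime at most `c·N^{1/ℓ}·(log₂ U)²`, such that every
`x ∈ T` is separated from all other elements of `T` by some tuple (no `y ∈ T`, `y ≠ x`,
agrees with `x` modulo all `ℓ` primes of that tuple). -/
theorem stmt_11 : ∃ c : ℝ, 0 < c ∧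
    ∀ (ℓ U N : ℕ) (T : Finset ℕ),
      1 ≤ ℓ → 2 ≤ U → (∀ x ∈ T, x < U) → T.card = N → 2 ≤ N →
      ∃ (k : ℕ) (P : Fin k → Fin ℓ → ℕ),
        (k : ℝ) ≤ c * 2 ^ ℓ * Real.logb 2 N ∧
        (∀ i j, (P i j).Prime ∧
          (P i j : ℝ) ≤ c * (N : ℝ) ^ ((1 : ℝ) / ℓ) * (Real.logb 2 U) ^ 2) ∧
        ∀ x ∈ T, ∃ i, ∀ y ∈ T, y ≠ x → ¬ (∀ j, y % P i j = x % P i j) := by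
  refine ⟨256, by norm_num, fun ℓ U N T hℓ hU hTU hTN hN => ?_⟩
  set A := ⌈(N : ℝ) ^ ((1 : ℝ) / ℓ)⌉₊
  have hr : 1 ≤ (N : ℝ) ^ ((1 : ℝ) / ℓ) :=
    Real.one_le_rpow (by exact_mod_cast (by omega : 1 ≤ N)) (by positivity)
  have hNU : N ≤ U :=
    hTN ▸ (card_le_card fun x hx => mem_range.2 (hTU x hx)).trans (card_range U).le
  have hTA : 2 * #T ≤ (2 * A) ^ Fintype.card (Fin ℓ) := by
    rw [Fintype.card_fin, mul_pow, hTN]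
    exact Nat.mul_le_mul (Nat.le_self_pow (by omega) 2)
      (Nat.le_ceil_rpow_one_div_pow N (by omega))
  obtain ⟨F, hFcard, hFP, hFT⟩ := exists_isolating_family hU hTU
    (Nat.one_le_ceil_iff.2 (by linarith)) ((Nat.ceil_rpow_one_div_le N hℓ).trans hNU) hTA
  refine ⟨#F, fun i => F.equivFin.symm i, ?_, fun i j => ?_, fun x hx => ?_⟩
  · have h2ℓ : (1 : ℝ) ≤ 2 ^ ℓ := one_le_pow₀ one_le_two
    have hlogb : 0 ≤ Real.logb 2 N :=
      Real.logb_nonneg one_lt_two (by exact_mod_cast (by omega : 1 ≤ N))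
    calc (#F : ℝ) ≤ Nat.log 2 N + 1 := by exact_mod_cast hTN ▸ hFcard
      _ ≤ 2 * Real.logb 2 N := Nat.log_add_one_le_two_mul_logb hN
      _ ≤ 256 * 2 ^ ℓ * Real.logb 2 N := by nlinarith
  · obtain ⟨hp, hle⟩ := hFP _ (F.equivFin.symm i).2 j
    refine ⟨hp, ?_⟩
    calc _ ≤ (128 * A * Nat.log 2 U ^ 2 : ℝ) := by exact_mod_cast hle
      _ ≤ 128 * (2 * (N : ℝ) ^ ((1 : ℝ) / ℓ)) * Real.logb 2 U ^ 2 := by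
        gcongr
        · exact Nat.ceil_le_two_mul (by linarith)
        · exact Real.natLog_le_logb U 2
      _ = _ := by ring
  · obtain ⟨q, hqF, hq⟩ := hFT x hx
    exact ⟨F.equivFin ⟨q, hqF⟩, by simpa [IsolatedBy] using hq⟩
end

section
/- Let u, v : ℤ → ℕ be finitely supported functions and let z = u * v be their convolution, i.e., z(s) = ∑_{a+b=s} u(a)·v(b). Let h : ℤ → ℤ and ĥ : ℤ → ℤ satisfy ĥ(h(a) + h(b)) = h(a + b) for all a, b ∈ ℤ. Let T be a finite subset of ℤ containing {a + b : u(a) ≠ 0, v(b) ≠ 0}, and let s ∈ T be such that for all y ∈ T, h(y) = h(s) implies y = s. Then ∑_{(a,b) : ĥ(h(a)+h(b)) = h(s)} u(a)·v(b) = z(s). -/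
def PseudoAdditive {α β : Type*} [Add α] [Add β] (h : α → β) (hh : β → β) : Prop :=
  ∀ a b, hh (h a + h b) = h (a + b)

theorem PseudoAdditive.hash_add_eq_iff {α β : Type*} [Add α] [Add β] {h : α → β} {hh : β → β}
    (hadd : PseudoAdditive h hh) {T : Set α} {s : α} (hcoll : ∀ y ∈ T, h y = h s → y = s)
    {a b : α} (hab : a + b ∈ T) : hh (h a + h b) = h s ↔ a + b = s := by
  rw [hadd]
  exact ⟨hcoll _ hab, fun H => H ▸ rfl⟩

theorem stmt_13_general (u v : ℤ →₀ ℕ) (h hh : ℤ → ℤ)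
    (hadd : ∀ a b : ℤ, hh (h a + h b) = h (a + b))
    (T : Finset ℤ) (hT : ∀ a b : ℤ, u a ≠ 0 → v b ≠ 0 → a + b ∈ T)
    (s : ℤ) (hcoll : ∀ y ∈ T, h y = h s → y = s) :
    (∑ a ∈ u.support, ∑ b ∈ v.support, if hh (h a + h b) = h s then u a * v b else 0) =
      ∑ a ∈ u.support, ∑ b ∈ v.support, if a + b = s then u a * v b else 0 := by
  refine Finset.sum_congr rfl fun a ha => Finset.sum_congr rfl fun b hb => ?_
  have hab : a + b ∈ (T : Set ℤ) :=
    hT a b (Finsupp.mem_support_iff.mp ha) (Finsupp.mem_support_iff.mp hb)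
  exact if_congr (PseudoAdditive.hash_add_eq_iff hadd hcoll hab) rfl rfl

/-- Correctness of the deterministic sparse convolution algorithm: for finitely
supported `u, v : ℤ → ℕ` with convolution `z(s) = ∑_{a+b=s} u(a)v(b)`, a
pseudo-additive pair `(h, ĥ)`, a finite `T ⊇ {a+b : u(a) ≠ 0, v(b) ≠ 0}`, and `s ∈ T`
with no collisions under `h` within `T`, the hashed convolution recovers `z(s)`:
`∑_{(a,b) : ĥ(h(a)+h(b)) = h(s)} u(a)v(b) = z(s)`. -/
theorem stmt_13 (u v : ℤ →₀ ℕ) (h hh : ℤ → ℤ)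
    (hadd : ∀ a b : ℤ, hh (h a + h b) = h (a + b))
    (T : Finset ℤ) (hT : ∀ a b : ℤ, u a ≠ 0 → v b ≠ 0 → a + b ∈ T)
    (s : ℤ) (hs : s ∈ T) (hcoll : ∀ y ∈ T, h y = h s → y = s) :
    (∑ a ∈ u.support, ∑ b ∈ v.support, if hh (h a + h b) = h s then u a * v b else 0) =
      ∑ a ∈ u.support, ∑ b ∈ v.support, if a + b = s then u a * v b else 0 :=
  stmt_13_general u v h hh hadd T hT s hcoll
end

section
/- Let A = {a₁, …, a_m} ⊆ ℤ² and B = {b₁, …, b_r} ⊆ ℤ² be finite sets given by sequences satisfying a_{i+1} − a_i ∈ {(1,0), (0,1)} for all 1 ≤ i < m and b_{j+1} − b_j ∈ {(1,0), (0,1)} for all 1 ≤ j < r (connected monotone increasing sets). Then for every k ∈ ℤ, the fiber {y ∈ ℤ : (k, y) ∈ A + B} is an interval of integers: if y₁ ≤ y ≤ y₂ and (k, y₁) ∈ A+B and (k, y₂) ∈ A+B, then (k, y) ∈ A+B. -/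
open Finset Pointwise

/-!
Along a monotone lattice path the level `x + y` grows by exactly one per step, so `a i + b j`
lies on level `c + i + j`, where `c` is the level of `a 0 + b 0`, and `(k, y) ∈ A + B` means that
some `(i, j)` on the antidiagonal `i + j = k + y - c` has `(a i).1 + (b j).1 = k`. Along an
antidiagonal this first coordinate moves by at most one per step, so it takes every value between
its extremes; since it is monotone in `i` and in `j`, the witnesses for `y₁` and `y₂`, lying below
and above the antidiagonal of `y`, bound those extremes from both sides.
-/

def IsMonotoneLatticePath (m : ℕ) (a : ℕ → ℤ × ℤ) : Prop :=
  ∀ i, i + 1 < m → a (i + 1) - a i = (1, 0) ∨ a (i + 1) - a i = (0, 1)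

namespace IsMonotoneLatticePath

variable {m : ℕ} {a : ℕ → ℤ × ℤ}

lemma fst_step (ha : IsMonotoneLatticePath m a) {i : ℕ} (hi : i + 1 < m) :
    (a i).1 ≤ (a (i + 1)).1 ∧ (a (i + 1)).1 ≤ (a i).1 + 1 := by
  rcases ha i hi with h | h <;>
  · simp only [Prod.ext_iff, Prod.fst_sub, Prod.snd_sub] at h
    omega

lemma fst_add_snd (ha : IsMonotoneLatticePath m a) {i : ℕ} (hi : i < m) :
    (a i).1 + (a i).2 = (a 0).1 + (a 0).2 + i := by
  induction i with
  | zero => simp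
  | succ i ih =>
    have hprev := ih (by omega)
    rcases ha i hi with h | h <;>
    · simp only [Prod.ext_iff, Prod.fst_sub, Prod.snd_sub] at h
      push_cast
      omega

end IsMonotoneLatticePath

lemma monotoneOn_Iio_of_le_succ {β : Type*} [Preorder β] {m : ℕ} {u : ℕ → β}
    (hu : ∀ i, i + 1 < m → u i ≤ u (i + 1)) : MonotoneOn u (Set.Iio m) :=
  monotoneOn_of_le_succ Set.ordConnected_Iio fun i _ _ hi =>
    hu i (by simpa [Order.succ_eq_add_one] using hi)

lemma exists_eq_of_abs_step_le_one {g : ℕ → ℤ} {p q : ℕ}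
    (hstep : ∀ n, min p q ≤ n → n < max p q → |g (n + 1) - g n| ≤ 1) {v : ℤ}
    (hv : v ∈ Set.uIcc (g p) (g q)) : ∃ n, min p q ≤ n ∧ n ≤ max p q ∧ g n = v := by
  wlog hpq : p ≤ q generalizing p q
  · rw [min_comm, max_comm] at hstep ⊢
    exact this hstep (Set.uIcc_comm (g p) (g q) ▸ hv) (le_of_not_ge hpq)
  rw [min_eq_left hpq, max_eq_right hpq] at hstep ⊢
  induction q, hpq using Nat.le_induction with
  | base => exact ⟨p, le_rfl, le_rfl, by simpa [eq_comm] using hv⟩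
  | succ q hpq ih =>
    by_cases hprev : v ∈ Set.uIcc (g p) (g q)
    · obtain ⟨n, hlo, hhi, hn⟩ := ih (fun n h₁ h₂ => hstep n h₁ (by omega)) hprev
      exact ⟨n, hlo, by omega, hn⟩
    · have hlast := abs_le.1 (hstep q hpq (by omega))
      rw [Set.mem_uIcc] at hv hprev
      exact ⟨q + 1, by omega, le_rfl, by omega⟩

lemma exists_antidiagonal_add_eq {m r : ℕ} {u v : ℕ → ℤ}
    (hu : ∀ i, i + 1 < m → u i ≤ u (i + 1) ∧ u (i + 1) ≤ u i + 1)
    (hv : ∀ j, j + 1 < r → v j ≤ v (j + 1) ∧ v (j + 1) ≤ v j + 1)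
    {i₁ j₁ i₂ j₂ s : ℕ} (hi₁ : i₁ < m) (hj₁ : j₁ < r) (hi₂ : i₂ < m) (hj₂ : j₂ < r)
    (hs₁ : i₁ + j₁ ≤ s) (hs₂ : s ≤ i₂ + j₂) {k : ℤ}
    (hk₁ : k ≤ u i₁ + v j₁) (hk₂ : u i₂ + v j₂ ≤ k) :
    ∃ i j, i < m ∧ j < r ∧ i + j = s ∧ u i + v j = k := by
  have hum := monotoneOn_Iio_of_le_succ fun i hi => (hu i hi).1
  have hvm := monotoneOn_Iio_of_le_succ fun j hj => (hv j hj).1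
  -- `(p, s - p)` lies componentwise above `(i₁, j₁)` and `(q, s - q)` below `(i₂, j₂)`
  set p := max i₁ (s + 1 - r)
  set q := min i₂ s
  have hp : k ≤ u p + v (s - p) :=
    hk₁.trans (add_le_add (hum hi₁ (Set.mem_Iio.2 (by omega)) (by omega))
      (hvm hj₁ (Set.mem_Iio.2 (by omega)) (by omega)))
  have hq : u q + v (s - q) ≤ k :=
    (add_le_add (hum (Set.mem_Iio.2 (by omega)) hi₂ (by omega))
      (hvm (Set.mem_Iio.2 (by omega)) hj₂ (by omega))).trans hk₂
  have hstep : ∀ n, min p q ≤ n → n < max p q →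
      |(u (n + 1) + v (s - (n + 1))) - (u n + v (s - n))| ≤ 1 := by
    intro n hlo hhi
    have hun := hu n (by omega)
    have hvn := hv (s - (n + 1)) (by omega)
    rw [show s - (n + 1) + 1 = s - n by omega] at hvn
    rw [abs_le]
    omega
  obtain ⟨n, hlo, hhi, hn⟩ := exists_eq_of_abs_step_le_one (g := fun i => u i + v (s - i)) hstep
    (Set.mem_uIcc.2 (Or.inr ⟨hq, hp⟩))
  exact ⟨n, s - n, by omega, by omega, by omega, hn⟩

lemma mem_image_add_image_iff {m r : ℕ} {a b : ℕ → ℤ × ℤ} (ha : IsMonotoneLatticePath m a)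
    (hb : IsMonotoneLatticePath r b) {k y : ℤ} :
    (k, y) ∈ (range m).image a + (range r).image b ↔
      ∃ i j, i < m ∧ j < r ∧ (i + j : ℤ) = k + y - ((a 0).1 + (a 0).2 + (b 0).1 + (b 0).2) ∧
        (a i).1 + (b j).1 = k := by
  simp only [mem_add, mem_image, mem_range]
  constructor
  · rintro ⟨_, ⟨i, hi, rfl⟩, _, ⟨j, hj, rfl⟩, hij⟩
    obtain ⟨hk, hy⟩ := Prod.ext_iff.1 hij
    simp only [Prod.fst_add, Prod.snd_add] at hk hy
    have := ha.fst_add_snd hi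
    have := hb.fst_add_snd hj
    exact ⟨i, j, hi, hj, by omega, hk⟩
  · rintro ⟨i, j, hi, hj, hs, hk⟩
    have := ha.fst_add_snd hi
    have := hb.fst_add_snd hj
    exact ⟨a i, ⟨i, hi, rfl⟩, b j, ⟨j, hj, rfl⟩, Prod.ext hk (by simp only [Prod.snd_add]; omega)⟩

theorem stmt_14_general (m r : ℕ)
    (a b : ℕ → ℤ × ℤ)
    (ha : ∀ i, i + 1 < m → a (i + 1) - a i = (1, 0) ∨ a (i + 1) - a i = (0, 1))
    (hb : ∀ j, j + 1 < r → b (j + 1) - b j = (1, 0) ∨ b (j + 1) - b j = (0, 1))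
    (A B : Finset (ℤ × ℤ))
    (hA : A = (Finset.range m).image a) (hB : B = (Finset.range r).image b)
    (k y y₁ y₂ : ℤ) (h1 : y₁ ≤ y) (h2 : y ≤ y₂)
    (hy1 : (k, y₁) ∈ A + B) (hy2 : (k, y₂) ∈ A + B) :
    (k, y) ∈ A + B := by
  have ha : IsMonotoneLatticePath m a := ha
  have hb : IsMonotoneLatticePath r b := hb
  subst hA hB
  rw [mem_image_add_image_iff ha hb] at hy1 hy2 ⊢
  obtain ⟨i₁, j₁, hi₁, hj₁, hs₁, hk₁⟩ := hy1
  obtain ⟨i₂, j₂, hi₂, hj₂, hs₂, hk₂⟩ := hy2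
  obtain ⟨i, j, hi, hj, hs, hk⟩ :=
    exists_antidiagonal_add_eq (u := fun i => (a i).1) (v := fun j => (b j).1)
      (fun _ => ha.fst_step) (fun _ => hb.fst_step) hi₁ hj₁ hi₂ hj₂
      (s := (k + y - ((a 0).1 + (a 0).2 + (b 0).1 + (b 0).2)).toNat) (by omega) (by omega)
      hk₁.ge hk₂.le
  exact ⟨i, j, hi, hj, by omega, hk⟩

/-- For connected monotone increasing sets `A, B ⊆ ℤ²` (each enumerated by a sequence
whose consecutive differences are `(1,0)` or `(0,1)`), every vertical fiber
`{y : (k, y) ∈ A + B}` of the sumset is an interval of integers. -/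
theorem stmt_14 (m r : ℕ) (hm : 1 ≤ m) (hr : 1 ≤ r)
    (a b : ℕ → ℤ × ℤ)
    (ha : ∀ i, i + 1 < m → a (i + 1) - a i = (1, 0) ∨ a (i + 1) - a i = (0, 1))
    (hb : ∀ j, j + 1 < r → b (j + 1) - b j = (1, 0) ∨ b (j + 1) - b j = (0, 1))
    (A B : Finset (ℤ × ℤ))
    (hA : A = (Finset.range m).image a) (hB : B = (Finset.range r).image b)
    (k y y₁ y₂ : ℤ) (h1 : y₁ ≤ y) (h2 : y ≤ y₂)
    (hy1 : (k, y₁) ∈ A + B) (hy2 : (k, y₂) ∈ A + B) :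
    (k, y) ∈ A + B :=
  stmt_14_general m r a b ha hb A B hA hB k y y₁ y₂ h1 h2 hy1 hy2
end

section
/- Let d ≥ 1, n ≥ 1, and ℓ ≥ 1 be integers. If S ⊆ {0, 1, …, n−1}^d is a monotone increasing set, then the set of grid cells intersected by S, namely {(⌊x₁/ℓ⌋, …, ⌊x_d/ℓ⌋) : (x₁, …, x_d) ∈ S}, is itself a monotone increasing set contained in {0, 1, …, ⌈n/ℓ⌉−1}^d, and hence has size at most d(⌈n/ℓ⌉ − 1) + 1. -/
/-- A finite set `S ⊆ ℕ^d` is monotone increasing if it can be enumerated as a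
sequence of distinct points whose `j`-th coordinates form a nondecreasing sequence,
for every coordinate `j`. -/
def MonoInc {d : ℕ} (S : Finset (Fin d → ℕ)) : Prop :=
  ∃ f : Fin S.card → (Fin d → ℕ),
    Function.Injective f ∧ (∀ x, x ∈ S ↔ ∃ i, f i = x) ∧
    ∀ j : Fin d, Monotone fun i => f i j

/-!
A monotone increasing set is exactly a chain for the coordinatewise order. Chains are preserved
by the monotone map `x ↦ ⌊x / ℓ⌋`, and on a chain the coordinate sum is injective, since it is
strictly monotone; in `{0, …, m−1}^d` it takes at most `d(m−1) + 1` values.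
-/

section MonoInc

variable {d : ℕ} {S : Finset (Fin d → ℕ)}

theorem MonoInc.isChain (h : MonoInc S) : IsChain (· ≤ ·) (S : Set (Fin d → ℕ)) := by
  obtain ⟨f, -, hmem, hmono⟩ := h
  have hrange : Set.range f = S := by
    ext x
    simp only [Set.mem_range, Finset.mem_coe, hmem]
  rw [← hrange]
  exact Monotone.isChain_range fun i i' hii j => hmono j hii

theorem IsChain.monoInc (h : IsChain (· ≤ ·) (S : Set (Fin d → ℕ))) : MonoInc S := by
  classical
  let := h.linearOrder
  let e : Fin S.card ≃o S := Fintype.orderIsoFinOfCardEq S (Fintype.card_coe S)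
  refine ⟨fun i => e i, Subtype.val_injective.comp e.injective, fun x => ⟨fun hx => ?_, ?_⟩,
    fun j i i' hii => e.monotone hii j⟩
  · obtain ⟨i, hi⟩ := e.surjective ⟨x, hx⟩
    exact ⟨i, congrArg Subtype.val hi⟩
  · rintro ⟨i, rfl⟩
    exact (e i).2

end MonoInc

theorem IsChain.card_le_of_strictMono {α : Type*} [PartialOrder α] {T : Finset α}
    (hT : IsChain (· ≤ ·) (T : Set α)) {r : α → ℕ} (hr : StrictMono r) {k : ℕ}
    (hk : ∀ x ∈ T, r x < k) : T.card ≤ k := by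
  have hinj : Set.InjOn r T := by
    intro x hx y hy hxy
    by_contra hne
    rcases hT hx hy hne with hle | hle
    · exact (hr (lt_of_le_of_ne hle hne)).ne hxy
    · exact (hr (lt_of_le_of_ne hle (Ne.symm hne))).ne' hxy
  simpa using Finset.card_le_card_of_injOn r (t := Finset.range k)
    (fun x hx => Finset.mem_range.mpr (hk x hx)) hinj

theorem IsChain.card_le_of_forall_lt {d m : ℕ} {T : Finset (Fin d → ℕ)}
    (hT : IsChain (· ≤ ·) (T : Set (Fin d → ℕ))) (hbox : ∀ y ∈ T, ∀ j, y j < m) :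
    T.card ≤ d * (m - 1) + 1 := by
  refine hT.card_le_of_strictMono Fintype.sum_strictMono fun y hy => Nat.lt_succ_of_le ?_
  calc ∑ j, y j ≤ ∑ _j : Fin d, (m - 1) :=
        Finset.sum_le_sum fun j _ => Nat.le_sub_one_of_lt (hbox y hy j)
    _ = d * (m - 1) := by simp

theorem Nat.div_lt_add_sub_one_div {a n ℓ : ℕ} (hℓ : 0 < ℓ) (ha : a < n) :
    a / ℓ < (n + ℓ - 1) / ℓ := by
  rw [← Nat.add_one_le_iff, Nat.le_div_iff_mul_le hℓ, add_one_mul]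
  have := Nat.div_mul_le_self a ℓ
  omega

theorem stmt_16_general (d n ℓ : ℕ) (hℓ : 1 ≤ ℓ)
    (S : Finset (Fin d → ℕ)) (hSn : ∀ x ∈ S, ∀ j, x j < n)
    (hmono : MonoInc S) :
    MonoInc (S.image fun x j => x j / ℓ) ∧
    (∀ y ∈ S.image fun x j => x j / ℓ, ∀ j, y j < (n + ℓ - 1) / ℓ) ∧
    (S.image fun x j => x j / ℓ).card ≤ d * ((n + ℓ - 1) / ℓ - 1) + 1 := by
  have hcell : Monotone fun (x : Fin d → ℕ) j => x j / ℓ :=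
    fun _ _ hxy j => Nat.div_le_div_right (hxy j)
  have hchain : IsChain (· ≤ ·) ((S.image fun x j => x j / ℓ : Finset _) : Set (Fin d → ℕ)) := by
    rw [Finset.coe_image]
    exact hcell.isChain_image hmono.isChain
  have hbox : ∀ y ∈ S.image fun x j => x j / ℓ, ∀ j, y j < (n + ℓ - 1) / ℓ := by
    simp only [Finset.mem_image]
    rintro _ ⟨x, hx, rfl⟩ j
    exact Nat.div_lt_add_sub_one_div hℓ (hSn x hx j)
  exact ⟨hchain.monoInc, hbox, hchain.card_le_of_forall_lt hbox⟩

/-- Clusterability of monotone sets: for a monotone increasing `S ⊆ {0,…,n−1}^d`,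
the set of grid cells `{(⌊x₁/ℓ⌋, …, ⌊x_d/ℓ⌋) : x ∈ S}` of side length `ℓ`
is itself a monotone increasing subset of `{0, …, ⌈n/ℓ⌉−1}^d`, and hence has size
at most `d(⌈n/ℓ⌉−1) + 1`.  (Here `⌈n/ℓ⌉ = (n + ℓ − 1)/ℓ` in natural division.) -/
theorem stmt_16 (d n ℓ : ℕ) (hd : 1 ≤ d) (hn : 1 ≤ n) (hℓ : 1 ≤ ℓ)
    (S : Finset (Fin d → ℕ)) (hSn : ∀ x ∈ S, ∀ j, x j < n)
    (hmono : MonoInc S) :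
    MonoInc (S.image fun x j => x j / ℓ) ∧
    (∀ y ∈ S.image fun x j => x j / ℓ, ∀ j, y j < (n + ℓ - 1) / ℓ) ∧
    (S.image fun x j => x j / ℓ).card ≤ d * ((n + ℓ - 1) / ℓ - 1) + 1 :=
  stmt_16_general d n ℓ hℓ S hSn hmono
end
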